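/- arXiv:1407.8222 — 6 statements merged into one kernel-verified Lean document; each statement's English description precedes it below -/
import Mathlib

section
/- Define f : ℕ → ℕ by f(n) = ∑_{k=0}^{n} C(4k, k)·C(3k, k)·128^{n-k}, where C(·,·) is the usual binomial coefficient. Then f(n)/128^n → √π / (Γ(5/8)·Γ(7/8)) as n → ∞; that is, f(n) ∼ (√π / (Γ(5/8)·Γ(7/8)))·128^n. -/
/-!
Since `C(4k, k) C(3k, k) = 64^k (1/4)_k (3/4)_k / k!²`, the quotient `f(n) / 128^n` is the `n`-th
partial sum of the hypergeometric series `₂F₁(1/4, 3/4; 1; 1/2)`. Writing `(a)_k / k!` as a Beta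
integral and summing the binomial series under the integral sign gives Euler's representation
`₂F₁(a, 1 - a; 1; 1/2) = (Γ(a) Γ(1 - a))⁻¹ ∫₀¹ t^(a-1) (1-t)^(-a) (1-t/2)^(a-1) dt`. The
substitution `v = (1 - t)²` turns the integral into `2^(-a) B((1 - a)/2, a)`, and Legendre's
duplication formula then yields Gauss's value `√π / (Γ((1 + a)/2) Γ(1 - a/2))`.
-/

open MeasureTheory Set Real Filter Polynomial
open scoped Nat

lemma Ring.multichoose_eq_ascPochhammer_div {R : Type*} [Field R] [CharZero R] (r : R) (n : ℕ) :
    Ring.multichoose r n = (ascPochhammer R n).eval r / n ! := by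
  rw [eq_div_iff (Nat.cast_ne_zero.2 n.factorial_ne_zero), mul_comm, ← nsmul_eq_mul,
    Ring.factorial_nsmul_multichoose_eq_ascPochhammer, ascPochhammer_smeval_eq_eval]

lemma Real.ascPochhammer_eval_eq_Gamma_div {a : ℝ} (ha : 0 < a) (n : ℕ) :
    (ascPochhammer ℝ n).eval a = Gamma (a + n) / Gamma a := by
  induction n with
  | zero => simp [(Gamma_pos_of_pos ha).ne']
  | succ n ih =>
    rw [ascPochhammer_succ_eval, ih, Nat.cast_succ, ← add_assoc,
      Gamma_add_one (by positivity)]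
    ring

lemma Real.multichoose_eq_Gamma_div {a : ℝ} (ha : 0 < a) (n : ℕ) :
    Ring.multichoose a n = Gamma (a + n) / (Gamma a * n !) := by
  rw [Ring.multichoose_eq_ascPochhammer_div, ascPochhammer_eval_eq_Gamma_div ha, div_div]

lemma Real.hasSum_multichoose_mul_pow (a : ℝ) {x : ℝ} (hx : |x| < 1) :
    HasSum (fun n => Ring.multichoose a n * x ^ n) ((1 - x) ^ (-a)) := by
  have h := (one_div_one_sub_rpow_hasFPowerSeriesOnBall_zero a).hasSum
    (y := x) (by simpa [enorm_eq_nnnorm, ← NNReal.coe_lt_one] using hx)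
  simpa [FormalMultilinearSeries.ofScalars_apply_eq, Ring.multichoose_eq, mul_comm,
    rpow_neg (by linarith [abs_lt.1 hx] : (0 : ℝ) ≤ 1 - x)] using h

lemma Complex.ofReal_rpow_mul_one_sub_rpow {t : ℝ} (ht₀ : 0 ≤ t) (ht₁ : t ≤ 1) (a b : ℝ) :
    ((t ^ (a - 1) * (1 - t) ^ (b - 1) : ℝ) : ℂ) =
      (t : ℂ) ^ ((a : ℂ) - 1) * (1 - (t : ℂ)) ^ ((b : ℂ) - 1) := by
  rw [Complex.ofReal_mul, Complex.ofReal_cpow ht₀, Complex.ofReal_cpow (sub_nonneg.2 ht₁)]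
  push_cast
  rfl

lemma Real.integrableOn_rpow_mul_one_sub_rpow {a b : ℝ} (ha : 0 < a) (hb : 0 < b) :
    IntegrableOn (fun t : ℝ => t ^ (a - 1) * (1 - t) ^ (b - 1)) (Ioo 0 1) := by
  have h := Complex.betaIntegral_convergent (u := a) (v := b) (by simpa) (by simpa)
  rw [intervalIntegrable_iff_integrableOn_Ioc_of_le zero_le_one] at h
  refine (IntegrableOn.mono_set h.norm Ioo_subset_Ioc_self).congr_fun (fun t ht => ?_)
    measurableSet_Ioo
  beta_reduce
  rw [← Complex.ofReal_rpow_mul_one_sub_rpow ht.1.le ht.2.le, Complex.norm_real, norm_of_nonneg]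
  exact mul_nonneg (rpow_nonneg ht.1.le _) (rpow_nonneg (sub_nonneg.2 ht.2.le) _)

lemma Real.integral_rpow_mul_one_sub_rpow {a b : ℝ} (ha : 0 < a) (hb : 0 < b) :
    ∫ t in Ioo 0 1, t ^ (a - 1) * (1 - t) ^ (b - 1) = Gamma a * Gamma b / Gamma (a + b) := by
  have h := Complex.betaIntegral_eq_Gamma_mul_div a b (by simpa) (by simpa)
  rw [Complex.betaIntegral, intervalIntegral.integral_of_le zero_le_one,
    integral_Ioc_eq_integral_Ioo, ← setIntegral_congr_fun measurableSet_Ioo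
      fun t ht => Complex.ofReal_rpow_mul_one_sub_rpow ht.1.le ht.2.le a b,
    integral_complex_ofReal,
    ← Complex.ofReal_add, Complex.Gamma_ofReal, Complex.Gamma_ofReal, Complex.Gamma_ofReal] at h
  exact_mod_cast h

theorem MeasureTheory.hasSum_integral_of_nonneg {α ι : Type*} [Countable ι]
    [MeasurableSpace α] {μ : Measure α} {F : ι → α → ℝ} {f : α → ℝ}
    (hF_meas : ∀ n, AEStronglyMeasurable (F n) μ)
    (hF_nonneg : ∀ n, 0 ≤ᵐ[μ] F n) (hf : Integrable f μ)
    (h_lim : ∀ᵐ a ∂μ, HasSum (fun n => F n a) (f a)) :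
    HasSum (fun n => ∫ a, F n a ∂μ) (∫ a, f a ∂μ) :=
  hasSum_integral_of_dominated_convergence F hF_meas
    (fun n => (hF_nonneg n).mono fun _ h => (Real.norm_of_nonneg h).le)
    (h_lim.mono fun _ h => h.summable)
    (hf.congr (h_lim.mono fun _ h => h.tsum_eq.symm)) h_lim

lemma Real.multichoose_pos {a : ℝ} (ha : 0 < a) (n : ℕ) : 0 < Ring.multichoose a n := by
  rw [multichoose_eq_Gamma_div ha]
  have := Gamma_pos_of_pos ha
  have := Gamma_pos_of_pos (show 0 < a + n by positivity)
  positivity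

/-- Euler's integral for `₂F₁(a, b; 1; x)`. -/
theorem Real.hasSum_multichoose_mul_multichoose_mul_pow {a b x : ℝ} (ha₀ : 0 < a)
    (ha₁ : a < 1) (hb : 0 < b) (hx₀ : 0 ≤ x) (hx₁ : x < 1) :
    HasSum (fun k => Ring.multichoose a k * Ring.multichoose b k * x ^ k)
      ((∫ t in Ioo 0 1, t ^ (a - 1) * (1 - t) ^ (-a) * (1 - x * t) ^ (-b)) /
        (Gamma a * Gamma (1 - a))) := by
  set w : ℝ → ℝ := fun t => t ^ (a - 1) * (1 - t) ^ (-a)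
  have hw : IntegrableOn w (Ioo 0 1) := by
    simpa [w, sub_sub_cancel_left] using integrableOn_rpow_mul_one_sub_rpow ha₀ (sub_pos.2 ha₁)
  have hw_nonneg : ∀ t ∈ Ioo (0 : ℝ) 1, 0 ≤ w t := fun t ht =>
    mul_nonneg (rpow_nonneg ht.1.le _) (rpow_nonneg (sub_nonneg.2 ht.2.le) _)
  have hmoment (k : ℕ) : ∫ t in Ioo 0 1, w t * t ^ k =
      Gamma a * Gamma (1 - a) * Ring.multichoose a k := by
    have hk : a + k + (1 - a) = (k : ℝ) + 1 := by ring
    rw [setIntegral_congr_fun measurableSet_Ioo fun t ht => by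
        simp only [w]
        rw [show (-a) = (1 - a) - 1 by ring, ← rpow_natCast, mul_right_comm, ← rpow_add ht.1,
          show a - 1 + k = (a + k) - 1 by ring],
      integral_rpow_mul_one_sub_rpow (by positivity) (sub_pos.2 ha₁), hk,
      Gamma_nat_eq_factorial, multichoose_eq_Gamma_div ha₀]
    have := (Gamma_pos_of_pos ha₀).ne'
    field_simp
  have hsum := hasSum_integral_of_nonneg (μ := volume.restrict (Ioo 0 1))
    (F := fun k t => w t * t ^ k * (Ring.multichoose b k * x ^ k))
    (f := fun t => w t * (1 - x * t) ^ (-b))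
    (fun k => (by fun_prop : Measurable fun t => w t * t ^ k * _).aestronglyMeasurable)
    (fun k => (ae_restrict_iff' measurableSet_Ioo).2 (ae_of_all _ fun t ht =>
      mul_nonneg (mul_nonneg (hw_nonneg t ht) (pow_nonneg ht.1.le k))
        (mul_nonneg (multichoose_pos hb k).le (pow_nonneg hx₀ k))))
    (hw.mul_continuousOn_of_subset (K := Icc 0 1) (ContinuousOn.rpow_const (by fun_prop)
      fun t ht => Or.inl (by nlinarith [ht.1, ht.2])) measurableSet_Ioo isCompact_Icc
      Ioo_subset_Icc_self)
    ((ae_restrict_iff' measurableSet_Ioo).2 (ae_of_all _ fun t ht => by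
      have hxt : |x * t| < 1 := by
        rw [abs_of_nonneg (mul_nonneg hx₀ ht.1.le)]; nlinarith [ht.1, ht.2]
      exact ((hasSum_multichoose_mul_pow b hxt).mul_left (w t)).congr_fun fun k => by ring))
  refine (hsum.div_const (Gamma a * Gamma (1 - a))).congr_fun fun k => ?_
  rw [integral_mul_const, hmoment]
  have := (Gamma_pos_of_pos ha₀).ne'
  have := (Gamma_pos_of_pos (sub_pos.2 ha₁)).ne'
  field_simp

lemma Real.integral_rpow_mul_one_sub_rpow_mul_one_sub_half_rpow (a : ℝ) :
    ∫ t in Ioo (0 : ℝ) 1, t ^ (a - 1) * (1 - t) ^ (-a) * (1 - 1 / 2 * t) ^ (-(1 - a)) =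
      2 ^ (-a) * ∫ v in Ioo (0 : ℝ) 1, v ^ ((1 - a) / 2 - 1) * (1 - v) ^ (a - 1) := by
  set g : ℝ → ℝ := fun t => (1 - t) ^ 2
  have hg_image : g '' Ioo 0 1 = Ioo 0 1 := by
    ext v
    constructor
    · rintro ⟨t, ht, rfl⟩
      exact ⟨by simp only [g]; nlinarith [ht.2], by simp only [g]; nlinarith [ht.1, ht.2]⟩
    · intro hv
      refine ⟨1 - √v, ⟨?_, ?_⟩, ?_⟩
      · linarith [(sqrt_lt' one_pos).2 (by simpa using hv.2)]
      · linarith [sqrt_pos.2 hv.1]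
      · simp [g, sq_sqrt hv.1.le]
  have hg_inj : InjOn g (Ioo 0 1) := fun t ht s hs h => by
    simp only [g] at h
    nlinarith [ht.2, hs.2]
  have hg_deriv : ∀ t ∈ Ioo (0 : ℝ) 1, HasDerivWithinAt g (-(2 * (1 - t))) (Ioo 0 1) t :=
    fun t _ => by
      simpa using (((hasDerivAt_id t).const_sub 1).fun_pow 2).hasDerivWithinAt
  have key := integral_image_eq_integral_abs_deriv_smul measurableSet_Ioo hg_deriv hg_inj
    fun v => v ^ ((1 - a) / 2 - 1) * (1 - v) ^ (a - 1)
  rw [hg_image] at key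
  rw [key, ← integral_const_mul]
  refine setIntegral_congr_fun measurableSet_Ioo fun t ⟨ht₀, ht₁⟩ => ?_
  have hu : 0 < 1 - t := sub_pos.2 ht₁
  have hs : 0 < 1 - 1 / 2 * t := by linarith
  have hu_pow : (1 - t) * (1 - t) ^ (2 * ((1 - a) / 2 - 1)) = (1 - t) ^ (-a) := by
    rw [show -a = 1 + 2 * ((1 - a) / 2 - 1) by ring, rpow_add hu, rpow_one]
  have h2_pow : (2 : ℝ) ^ (-a) * (2 * 2 ^ (a - 1)) = 1 := by
    rw [mul_comm 2, ← rpow_add_one two_ne_zero, ← rpow_add two_pos]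
    norm_num
  simp only [g, smul_eq_mul, abs_neg, abs_of_pos (by positivity : 0 < 2 * (1 - t))]
  rw [show 1 - (1 - t) ^ 2 = 2 * t * (1 - 1 / 2 * t) by ring, ← rpow_natCast (1 - t) 2,
    ← rpow_mul hu.le, mul_rpow (by positivity) hs.le, mul_rpow zero_le_two ht₀.le, neg_sub]
  push_cast
  linear_combination (-(t ^ (a - 1) * (1 - 1 / 2 * t) ^ (a - 1) * (1 - t) ^ (-a))) * h2_pow
    - (t ^ (a - 1) * (1 - 1 / 2 * t) ^ (a - 1) * ((2 : ℝ) ^ (-a) * (2 * 2 ^ (a - 1)))) * hu_pow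

/-- Gauss's second summation theorem for `₂F₁(a, 1 - a; 1; 1/2)`. -/
theorem Real.hasSum_multichoose_mul_multichoose_one_sub_mul_half {a : ℝ} (ha₀ : 0 < a)
    (ha₁ : a < 1) :
    HasSum (fun k => Ring.multichoose a k * Ring.multichoose (1 - a) k * (1 / 2) ^ k)
      (√π / (Gamma ((1 + a) / 2) * Gamma (1 - a / 2))) := by
  have h := hasSum_multichoose_mul_multichoose_mul_pow ha₀ ha₁ (sub_pos.2 ha₁)
    (by norm_num : (0 : ℝ) ≤ 1 / 2) (by norm_num)
  rw [integral_rpow_mul_one_sub_rpow_mul_one_sub_half_rpow,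
    integral_rpow_mul_one_sub_rpow (by linarith) ha₀] at h
  convert h using 1
  have hdup := Gamma_mul_Gamma_add_half ((1 - a) / 2)
  rw [show (1 - a) / 2 + 1 / 2 = 1 - a / 2 by ring, show 2 * ((1 - a) / 2) = 1 - a by ring,
    show 1 - (1 - a) = a by ring] at hdup
  rw [show (1 - a) / 2 + a = (1 + a) / 2 by ring, rpow_neg zero_le_two]
  have := (Gamma_pos_of_pos ha₀).ne'
  have := (Gamma_pos_of_pos (sub_pos.2 ha₁)).ne'
  have := (Gamma_pos_of_pos (show 0 < (1 + a) / 2 by linarith)).ne'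
  have := (rpow_pos_of_pos two_pos a).ne'
  have hy := (Gamma_pos_of_pos (show 0 < 1 - a / 2 by linarith)).ne'
  -- otherwise `field_simp` rewrites the argument `1 - a / 2` and loses the match with `hdup`
  generalize Gamma (1 - a / 2) = y at hdup hy ⊢
  field_simp
  linear_combination -hdup

lemma Nat.factorial_four_mul_eq (k : ℕ) :
    ((4 * k)! : ℝ) = 64 ^ k * (2 * k)! *
      (ascPochhammer ℝ k).eval (1 / 4) * (ascPochhammer ℝ k).eval (3 / 4) := by
  induction k with
  | zero => simp
  | succ k ih =>
    rw [show 4 * (k + 1) = 4 * k + 1 + 1 + 1 + 1 by ring,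
      show 2 * (k + 1) = 2 * k + 1 + 1 by ring]
    simp only [Nat.factorial_succ, ascPochhammer_succ_eval]
    push_cast
    rw [ih]
    ring

lemma Nat.choose_four_mul_mul_choose_three_mul (k : ℕ) :
    (((4 * k).choose k * (3 * k).choose k : ℕ) : ℝ) =
      64 ^ k * Ring.multichoose (1 / 4 : ℝ) k * Ring.multichoose (3 / 4 : ℝ) k := by
  have h₄ := Nat.choose_mul_factorial_mul_factorial (show k ≤ 4 * k by omega)
  have h₃ := Nat.choose_mul_factorial_mul_factorial (show k ≤ 3 * k by omega)
  rw [show 4 * k - k = 3 * k by omega] at h₄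
  rw [show 3 * k - k = 2 * k by omega] at h₃
  have h :
      (((4 * k).choose k * (3 * k).choose k : ℕ) : ℝ) * k ! * k ! * (2 * k)! = (4 * k)! := by
    rw [← h₄, ← h₃]; push_cast; ring
  rw [factorial_four_mul_eq] at h
  rw [Ring.multichoose_eq_ascPochhammer_div, Ring.multichoose_eq_ascPochhammer_div]
  have : (k ! : ℝ) ≠ 0 := by positivity
  field_simp
  apply mul_right_cancel₀ (by positivity : ((2 * k)! : ℝ) ≠ 0)
  linear_combination h

lemma Nat.cast_sum_mul_pow_sub_div_pow (c : ℕ → ℕ) {r : ℕ} (hr : r ≠ 0) (n : ℕ) :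
    ((∑ k ∈ Finset.range (n + 1), c k * r ^ (n - k) : ℕ) : ℝ) / r ^ n =
      ∑ k ∈ Finset.range (n + 1), (c k : ℝ) / r ^ k := by
  rw [Nat.cast_sum, Finset.sum_div]
  refine Finset.sum_congr rfl fun k hk => ?_
  have hkn : k ≤ n := Nat.lt_succ_iff.mp (Finset.mem_range.mp hk)
  rw [div_eq_div_iff (by positivity) (by positivity), ← pow_sub_mul_pow (r : ℝ) hkn]
  push_cast
  ring

lemma hasSum_choose_four_mul_mul_choose_three_mul_div_pow :
    HasSum (fun k => (((4 * k).choose k * (3 * k).choose k : ℕ) : ℝ) / 128 ^ k)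
      (√π / (Gamma (5 / 8) * Gamma (7 / 8))) := by
  have h := hasSum_multichoose_mul_multichoose_one_sub_mul_half (a := 1 / 4) (by norm_num)
    (by norm_num)
  rw [show (1 : ℝ) - 1 / 4 = 3 / 4 by norm_num, show ((1 : ℝ) + 1 / 4) / 2 = 5 / 8 by norm_num,
    show (1 : ℝ) - 1 / 4 / 2 = 7 / 8 by norm_num] at h
  refine h.congr_fun fun k => ?_
  rw [Nat.choose_four_mul_mul_choose_three_mul, one_div_pow,
    show (128 : ℝ) ^ k = 64 ^ k * 2 ^ k by rw [← mul_pow]; norm_num]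
  field_simp

/-- The explicit tile counting function
`f(n) = ∑_{k=0}^n C(4k,k)·C(3k,k)·128^{n-k}` satisfies
`f(n) ∼ (√π / (Γ(5/8)·Γ(7/8)))·128^n`. -/
theorem tileCounting_gamma_asymptotics :
    Filter.Tendsto
      (fun n : ℕ =>
        ((∑ k ∈ Finset.range (n + 1),
            Nat.choose (4 * k) k * Nat.choose (3 * k) k * 128 ^ (n - k) : ℕ) : ℝ) /
          128 ^ n)
      Filter.atTop
      (nhds (Real.sqrt Real.pi / (Real.Gamma (5 / 8) * Real.Gamma (7 / 8)))) := by
  refine (hasSum_choose_four_mul_mul_choose_three_mul_div_pow.tendsto_sum_nat.comp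
    (tendsto_add_atTop_nat 1)).congr fun n => ?_
  simpa using (Nat.cast_sum_mul_pow_sub_div_pow
    (fun k => (4 * k).choose k * (3 * k).choose k) (by norm_num : 128 ≠ 0) n).symm
end

section
/- If f : ℕ → ℕ and g : ℕ → ℕ are both binomial multisums, then the pointwise sum f + g and the pointwise product f · g are binomial multisums. -/
/-- Modified binomial coefficient: `C(a,b) = a!/((a-b)!·b!)` if `0 ≤ b ≤ a`,
`C(-1,0) = 1`, and `0` otherwise. -/
def mbinom (a b : ℤ) : ℕ :=
  if 0 ≤ b ∧ b ≤ a then a.toNat.choose b.toNat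
  else if a = -1 ∧ b = 0 then 1 else 0

/-- The general term of a binomial multisum, indexed by `v ∈ ℤ^d`. -/
def multisumTerm {r d : ℕ} (A B : Fin r → Fin d → ℤ) (a' a'' b' b'' : Fin r → ℤ)
    (n : ℕ) (v : Fin d → ℤ) : ℕ :=
  ∏ i, mbinom ((∑ j, A i j * v j) + a' i * (n : ℤ) + a'' i)
              ((∑ j, B i j * v j) + b' i * (n : ℤ) + b'' i)

/-- `f : ℕ → ℕ` is a binomial multisum: for every `n` only finitely many `v ∈ ℤ^d`
contribute, and `f n` is the (finite) sum of the products of modified binomial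
coefficients of integer-coefficient affine functions of `(v, n)`. -/
def IsBinomialMultisum (f : ℕ → ℕ) : Prop :=
  ∃ (r d : ℕ) (A B : Fin r → Fin d → ℤ) (a' a'' b' b'' : Fin r → ℤ),
    (∀ n : ℕ, (Function.support (multisumTerm A B a' a'' b' b'' n)).Finite) ∧
    ∀ n : ℕ, f n = ∑ᶠ v : Fin d → ℤ, multisumTerm A B a' a'' b' b'' n v

namespace BMS

abbrev Vec (d : ℕ) := Fin d → ℚ

def dot {d : ℕ} (u v : Vec d) : ℚ := ∑ j, u j * v j

variable {d : ℕ}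

lemma dot_sub (x y w : Vec d) : dot (x - y) w = dot x w - dot y w := by
  simp [dot, sub_mul, Finset.sum_sub_distrib]

lemma dot_smul (q : ℚ) (x w : Vec d) : dot (q • x) w = q * dot x w := by
  simp [dot, Finset.mul_sum, mul_assoc]

lemma dot_zero_left (w : Vec d) : dot 0 w = 0 := by simp [dot]

lemma dot_zero_right (x : Vec d) : dot x 0 = 0 := by simp [dot]

lemma dot_sub_smul (x : Vec d) (q : ℚ) (a w : Vec d) :
    dot (x - q • a) w = dot x w - q * dot a w := by
  rw [dot_sub, dot_smul]

lemma dot_sub_smul_right (x w1 : Vec d) (q : ℚ) (w0 : Vec d) :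
    dot x (w1 - q • w0) = dot x w1 - q * dot x w0 := by
  simp only [dot, Pi.sub_apply, Pi.smul_apply, smul_eq_mul, mul_sub,
    Finset.sum_sub_distrib, Finset.mul_sum]
  congr 1
  apply Finset.sum_congr rfl
  intro j _
  ring

/-- `InConeC L t c` : `t` is a nonnegative rational combination of the vectors in `L`,
with total "cost" `c` (cost of each generator given as second component). -/
def InConeC : List (Vec d × ℚ) → Vec d → ℚ → Prop
  | [], t, c => t = 0 ∧ c = 0
  | p :: L, t, c => ∃ μ c', 0 ≤ μ ∧ InConeC L (t - μ • p.1) c' ∧ c = μ * p.2 + c'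

lemma InConeC_eval : ∀ (L : List (Vec d × ℚ)) (t : Vec d) (c : ℚ) (v : Vec d) (s : ℚ),
    0 ≤ s → InConeC L t c → (∀ p ∈ L, -(p.2 * s) ≤ dot p.1 v) → -(c * s) ≤ dot t v := by
  intro L
  induction L with
  | nil => rintro t c v s hs ⟨rfl, rfl⟩ _; simp [dot_zero_left]
  | cons p L ih =>
    rintro t c v s hs ⟨μ, c', hμ, hrec, rfl⟩ hrows
    have h1 : -(c' * s) ≤ dot (t - μ • p.1) v :=
      ih _ _ _ _ hs hrec fun q hq => hrows q (List.mem_cons_of_mem _ hq)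
    have h2 : μ * -(p.2 * s) ≤ μ * dot p.1 v :=
      mul_le_mul_of_nonneg_left (hrows p List.mem_cons_self) hμ
    have := add_le_add h1 h2
    rw [dot_sub_smul] at h1
    nlinarith [h1, h2]

/-- The "untilde" step for the Farkas induction. -/
lemma untilde (a1 : Vec d) (ca : ℚ) (w0 : Vec d) (hσ : dot a1 w0 < 0) :
    ∀ (L : List (Vec d × ℚ)) (t : Vec d) (c : ℚ),
    (∀ p ∈ L, 0 ≤ dot p.1 w0) → 0 ≤ dot t w0 / dot a1 w0 →
    InConeC (L.map fun p => (p.1 - (dot p.1 w0 / dot a1 w0) • a1,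
        p.2 - dot p.1 w0 / dot a1 w0 * ca))
      (t - (dot t w0 / dot a1 w0) • a1) c →
    InConeC ((a1, ca) :: L) t (dot t w0 / dot a1 w0 * ca + c) := by
  intro L
  induction L with
  | nil =>
    rintro t c hrows hθ ⟨h0, rfl⟩
    exact ⟨dot t w0 / dot a1 w0, 0, hθ, ⟨h0, rfl⟩, by ring⟩
  | cons p L ih =>
    rintro t c hrows hθ ⟨μ, c', hμ, hrec, rfl⟩
    have hp0 : 0 ≤ dot p.1 w0 := hrows p List.mem_cons_self
    have hθp : dot p.1 w0 / dot a1 w0 ≤ 0 := div_nonpos_of_nonneg_of_nonpos hp0 (le_of_lt hσ)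
    -- rewrite the recursive vector as φ (t - μ • p.1)
    have hvec : t - (dot t w0 / dot a1 w0) • a1
          - μ • (p.1 - (dot p.1 w0 / dot a1 w0) • a1)
        = (t - μ • p.1) - (dot (t - μ • p.1) w0 / dot a1 w0) • a1 := by
      funext j
      have : dot (t - μ • p.1) w0 = dot t w0 - μ * dot p.1 w0 := dot_sub_smul _ _ _ _
      simp only [Pi.sub_apply, Pi.smul_apply, smul_eq_mul, this]
      field_simp
      ring
    rw [hvec] at hrec
    have hθ' : 0 ≤ dot (t - μ • p.1) w0 / dot a1 w0 := by
      rw [dot_sub_smul, sub_div]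
      have : μ * dot p.1 w0 / dot a1 w0 ≤ 0 := by
        rw [mul_div_assoc]
        exact mul_nonpos_of_nonneg_of_nonpos hμ hθp
      linarith
    have hIH := ih (t - μ • p.1) c' (fun q hq => hrows q (List.mem_cons_of_mem _ hq)) hθ' hrec
    obtain ⟨ν, c'', hν, h3, hc3⟩ := hIH
    refine ⟨ν, μ * p.2 + c'', hν, ⟨μ, c'', hμ, ?_, rfl⟩, ?_⟩
    · have : t - ν • a1 - μ • p.1 = t - μ • p.1 - ν • a1 := by abel
      rw [this]; exact h3
    · have hd : dot (t - μ • p.1) w0 = dot t w0 - μ * dot p.1 w0 := dot_sub_smul _ _ _ _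
      rw [hd, sub_div] at hc3
      have hσ0 : dot a1 w0 ≠ 0 := ne_of_lt hσ
      field_simp at hc3 ⊢
      linarith [hc3]

theorem farkasC (N : ℕ) : ∀ (L : List (Vec d × ℚ)), L.length = N → ∀ t : Vec d,
    (∃ c, InConeC L t c) ∨ (∃ w : Vec d, (∀ p ∈ L, 0 ≤ dot p.1 w) ∧ dot t w < 0) := by
  induction N with
  | zero =>
    intro L hL t
    rw [List.length_eq_zero_iff] at hL
    subst hL
    by_cases ht : t = 0
    · exact Or.inl ⟨0, ht, rfl⟩
    · refine Or.inr ⟨-t, by simp, ?_⟩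
      obtain ⟨j, hj⟩ : ∃ j, t j ≠ 0 := by
        by_contra h; push_neg at h; exact ht (funext h)
      have hpos : 0 < ∑ j, t j * t j :=
        Finset.sum_pos' (fun i _ => mul_self_nonneg _)
          ⟨j, Finset.mem_univ _, mul_self_pos.2 hj⟩
      have : dot t (-t) = -∑ j, t j * t j := by
        simp [dot, mul_neg]
      rw [this]; linarith
  | succ N ih =>
    intro L hL t
    obtain ⟨a, L', rfl⟩ : ∃ a L', L = a :: L' := by
      cases L with
      | nil => simp at hL
      | cons a L' => exact ⟨a, L', rfl⟩
    have hL' : L'.length = N := by simpa using hL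
    rcases ih L' hL' t with ⟨c, hc⟩ | ⟨w0, hw0, htw0⟩
    · exact Or.inl ⟨0 * a.2 + c, 0, c, le_refl _, by simpa using hc, rfl⟩
    · by_cases ha : 0 ≤ dot a.1 w0
      · refine Or.inr ⟨w0, ?_, htw0⟩
        intro p hp
        rcases List.mem_cons.1 hp with rfl | hp
        · exact ha
        · exact hw0 p hp
      · push_neg at ha
        set L'' := L'.map (fun p => (p.1 - (dot p.1 w0 / dot a.1 w0) • a.1,
            p.2 - dot p.1 w0 / dot a.1 w0 * a.2)) with hL''
        have hlen : L''.length = N := by simp [hL'', hL']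
        rcases ih L'' hlen (t - (dot t w0 / dot a.1 w0) • a.1) with ⟨c, hc⟩ | ⟨w1, hw1, htw1⟩
        · left
          have hθ : 0 ≤ dot t w0 / dot a.1 w0 :=
            le_of_lt (div_pos_of_neg_of_neg htw0 ha)
          exact ⟨_, untilde a.1 a.2 w0 ha L' t c hw0 hθ hc⟩
        · right
          have hσ0 : dot a.1 w0 ≠ 0 := ne_of_lt ha
          refine ⟨w1 - (dot a.1 w1 / dot a.1 w0) • w0, ?_, ?_⟩
          · intro p hp
            rcases List.mem_cons.1 hp with rfl | hp
            · rw [dot_sub_smul_right]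
              field_simp
              simp
            · have h1 := hw1 _ (List.mem_map_of_mem hp)
              rw [dot_sub_smul] at h1
              rw [dot_sub_smul_right]
              have : dot p.1 w1 - dot a.1 w1 / dot a.1 w0 * dot p.1 w0
                  = dot p.1 w1 - dot p.1 w0 / dot a.1 w0 * dot a.1 w1 := by
                field_simp
              rw [this]; exact h1
          · rw [dot_sub_smul] at htw1
            rw [dot_sub_smul_right]
            have : dot t w1 - dot a.1 w1 / dot a.1 w0 * dot t w0
                = dot t w1 - dot t w0 / dot a.1 w0 * dot a.1 w1 := by
              field_simp
            rw [this]; exact htw1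

/-- If the dual cone is trivial, every vector is in the cone. -/
theorem inConeC_of_trivial (L : List (Vec d × ℚ))
    (h : ∀ w : Vec d, (∀ p ∈ L, 0 ≤ dot p.1 w) → w = 0) (t : Vec d) :
    ∃ c, InConeC L t c := by
  rcases farkasC L.length L rfl t with h1 | ⟨w, hw, htw⟩
  · exact h1
  · exfalso
    rw [h w hw, dot_zero_right] at htw
    exact lt_irrefl _ htw


lemma mbinom_ne_zero_iff {a b : ℤ} :
    mbinom a b ≠ 0 ↔ (0 ≤ b ∧ b ≤ a) ∨ (a = -1 ∧ b = 0) := by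
  unfold mbinom
  split_ifs with h1 h2
  · simp only [ne_eq]
    constructor
    · intro _; exact Or.inl h1
    · intro _
      have hb : b.toNat ≤ a.toNat := Int.toNat_le_toNat h1.2
      exact (Nat.choose_pos hb).ne'
  · simp [h2]
  · simp [h1, h2]

lemma mbinom_diag (z : ℤ) : mbinom z z = if 0 ≤ z then 1 else 0 := by
  unfold mbinom
  split_ifs with h1 h2 h3 h2 <;> first
    | rfl
    | (exact Nat.choose_self _)
    | omega

lemma mbinom_diag_nonneg {z : ℤ} (h : 0 ≤ z) : mbinom z z = 1 := by
  rw [mbinom_diag, if_pos h]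

lemma mbinom_diag_ne_zero {z : ℤ} (h : mbinom z z ≠ 0) : 0 ≤ z := by
  rcases mbinom_ne_zero_iff.1 h with ⟨h1, _⟩ | ⟨h1, h2⟩ <;> omega

lemma mbinom_zero_right {a : ℤ} (h : 0 ≤ a) : mbinom a 0 = 1 := by
  unfold mbinom
  rw [if_pos ⟨le_refl 0, h⟩]
  exact Nat.choose_zero_right _

lemma mbinom_special : mbinom (-1) 0 = 1 := by
  unfold mbinom
  norm_num

/-- Generalized multisum term, with arbitrary finite index types. -/
def GTerm {ι κ : Type*} [Fintype ι] [Fintype κ] (X Y : ι → κ → ℤ) (x' x'' y' y'' : ι → ℤ)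
    (n : ℕ) (v : κ → ℤ) : ℕ :=
  ∏ i, mbinom ((∑ j, X i j * v j) + x' i * (n : ℤ) + x'' i)
              ((∑ j, Y i j * v j) + y' i * (n : ℤ) + y'' i)

lemma isBinomialMultisum_of_GTerm {ι κ : Type*} [Fintype ι] [Fintype κ]
    (X Y : ι → κ → ℤ) (x' x'' y' y'' : ι → ℤ) (f : ℕ → ℕ)
    (hfin : ∀ n, (Function.support (GTerm X Y x' x'' y' y'' n)).Finite)
    (hsum : ∀ n, f n = ∑ᶠ v : κ → ℤ, GTerm X Y x' x'' y' y'' n v) :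
    IsBinomialMultisum f := by
  classical
  let eι := Fintype.equivFin ι
  let eκ := Fintype.equivFin κ
  have key : ∀ (n : ℕ) (v : Fin (Fintype.card κ) → ℤ),
      multisumTerm (fun i j => X (eι.symm i) (eκ.symm j))
        (fun i j => Y (eι.symm i) (eκ.symm j))
        (x' ∘ eι.symm) (x'' ∘ eι.symm) (y' ∘ eι.symm) (y'' ∘ eι.symm) n v
      = GTerm X Y x' x'' y' y'' n (v ∘ eκ) := by
    intro n v
    unfold multisumTerm GTerm
    apply Fintype.prod_equiv eι.symm
    intro i
    have hx : ∀ Z : ι → κ → ℤ, (∑ j, Z (eι.symm i) (eκ.symm j) * v j)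
        = ∑ j', Z (eι.symm i) j' * v (eκ j') := by
      intro Z
      apply Fintype.sum_equiv eκ.symm
      intro j
      simp
    simp only [Function.comp_apply]
    rw [hx X, hx Y]
  refine ⟨Fintype.card ι, Fintype.card κ,
    fun i j => X (eι.symm i) (eκ.symm j), fun i j => Y (eι.symm i) (eκ.symm j),
    x' ∘ eι.symm, x'' ∘ eι.symm, y' ∘ eι.symm, y'' ∘ eι.symm, ?_, ?_⟩
  · intro n
    have : Function.support (multisumTerm (fun i j => X (eι.symm i) (eκ.symm j))
          (fun i j => Y (eι.symm i) (eκ.symm j))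
          (x' ∘ eι.symm) (x'' ∘ eι.symm) (y' ∘ eι.symm) (y'' ∘ eι.symm) n)
        = (fun v : Fin (Fintype.card κ) → ℤ => v ∘ eκ) ⁻¹'
            (Function.support (GTerm X Y x' x'' y' y'' n)) := by
      ext v
      simp only [Function.mem_support, Set.mem_preimage, key n v]
    rw [this]
    apply Set.Finite.preimage _ (hfin n)
    intro u _ w _ huw
    funext j
    have := congrFun huw (eκ.symm j)
    simpa using this
  · intro n
    rw [hsum n]
    have : ∀ v : Fin (Fintype.card κ) → ℤ,
        multisumTerm (fun i j => X (eι.symm i) (eκ.symm j))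
          (fun i j => Y (eι.symm i) (eκ.symm j))
          (x' ∘ eι.symm) (x'' ∘ eι.symm) (y' ∘ eι.symm) (y'' ∘ eι.symm) n v
        = GTerm X Y x' x'' y' y'' n
            ((Equiv.arrowCongr eκ.symm (Equiv.refl ℤ)) v) := by
      intro v
      rw [key n v]
      rfl
    rw [finsum_congr this, finsum_comp_equiv (Equiv.arrowCongr eκ.symm (Equiv.refl ℤ))]

/-- finsum over a product of two finitely-supported `ℕ`-valued functions. -/
lemma finsum_mul_finsum {α β : Type*} (F : α → ℕ) (G : β → ℕ)
    (hF : (Function.support F).Finite) (hG : (Function.support G).Finite) :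
    ∑ᶠ p : α × β, F p.1 * G p.2 = (∑ᶠ a, F a) * (∑ᶠ b, G b) := by
  classical
  have hsub : Function.support (fun p : α × β => F p.1 * G p.2)
      ⊆ ((hF.toFinset ×ˢ hG.toFinset : Finset (α × β)) : Set (α × β)) := by
    intro p hp
    simp only [Function.mem_support, Nat.mul_ne_zero_iff] at hp
    simp only [Finset.coe_product, Set.mem_prod, Finset.mem_coe, Set.Finite.mem_toFinset,
      Function.mem_support]
    exact ⟨hp.1, hp.2⟩
  rw [finsum_eq_finset_sum_of_support_subset _ hsub,
    finsum_eq_finset_sum_of_support_subset F (s := hF.toFinset) (by simp),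
    finsum_eq_finset_sum_of_support_subset G (s := hG.toFinset) (by simp),
    Finset.sum_mul_sum, Finset.sum_product]

lemma isBinomialMultisum_mul {f g : ℕ → ℕ}
    (hf : IsBinomialMultisum f) (hg : IsBinomialMultisum g) :
    IsBinomialMultisum (fun n => f n * g n) := by
  classical
  obtain ⟨r1, d1, A1, B1, a1', a1'', b1', b1'', hfin1, hsum1⟩ := hf
  obtain ⟨r2, d2, A2, B2, a2', a2'', b2', b2'', hfin2, hsum2⟩ := hg
  let X : (Fin r1 ⊕ Fin r2) → (Fin d1 ⊕ Fin d2) → ℤ :=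
    Sum.elim (fun i => Sum.elim (A1 i) 0) (fun i => Sum.elim 0 (A2 i))
  let Y : (Fin r1 ⊕ Fin r2) → (Fin d1 ⊕ Fin d2) → ℤ :=
    Sum.elim (fun i => Sum.elim (B1 i) 0) (fun i => Sum.elim 0 (B2 i))
  let E : ((Fin d1 ⊕ Fin d2) → ℤ) ≃ ((Fin d1 → ℤ) × (Fin d2 → ℤ)) :=
    Equiv.sumArrowEquivProdArrow _ _ ℤ
  have key : ∀ (n : ℕ) (v : (Fin d1 ⊕ Fin d2) → ℤ),
      GTerm X Y (Sum.elim a1' a2') (Sum.elim a1'' a2'') (Sum.elim b1' b2') (Sum.elim b1'' b2'') n v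
      = multisumTerm A1 B1 a1' a1'' b1' b1'' n (v ∘ Sum.inl)
        * multisumTerm A2 B2 a2' a2'' b2' b2'' n (v ∘ Sum.inr) := by
    intro n v
    unfold GTerm multisumTerm
    rw [Fintype.prod_sum_type]
    congr 1
    · apply Finset.prod_congr rfl
      intro i _
      congr 2 <;> · rw [Fintype.sum_sum_type]; simp [X, Y]
    · apply Finset.prod_congr rfl
      intro i _
      congr 2 <;> · rw [Fintype.sum_sum_type]; simp [X, Y]
  have hEcomp : ∀ v : (Fin d1 ⊕ Fin d2) → ℤ,
      (E v).1 = v ∘ Sum.inl ∧ (E v).2 = v ∘ Sum.inr := fun v => ⟨rfl, rfl⟩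
  apply isBinomialMultisum_of_GTerm X Y (Sum.elim a1' a2') (Sum.elim a1'' a2'')
    (Sum.elim b1' b2') (Sum.elim b1'' b2'')
  · intro n
    have hsub : Function.support (GTerm X Y (Sum.elim a1' a2') (Sum.elim a1'' a2'')
          (Sum.elim b1' b2') (Sum.elim b1'' b2'') n)
        ⊆ ⇑E ⁻¹' ((Function.support (multisumTerm A1 B1 a1' a1'' b1' b1'' n))
            ×ˢ (Function.support (multisumTerm A2 B2 a2' a2'' b2' b2'' n))) := by
      intro v hv
      rw [Function.mem_support, key] at hv
      rcases Nat.mul_ne_zero_iff.1 hv with ⟨h1, h2⟩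
      exact ⟨h1, h2⟩
    apply Set.Finite.subset _ hsub
    exact Set.Finite.preimage (E.injective.injOn) ((hfin1 n).prod (hfin2 n))
  · intro n
    have h1 : ∀ v : (Fin d1 ⊕ Fin d2) → ℤ,
        GTerm X Y (Sum.elim a1' a2') (Sum.elim a1'' a2'') (Sum.elim b1' b2')
          (Sum.elim b1'' b2'') n v
        = (fun p : (Fin d1 → ℤ) × (Fin d2 → ℤ) =>
            multisumTerm A1 B1 a1' a1'' b1' b1'' n p.1
            * multisumTerm A2 B2 a2' a2'' b2' b2'' n p.2) (E v) := by
      intro v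
      rw [key]
      rfl
    have h2 := finsum_comp_equiv (M := ℕ) E
      (f := fun p : (Fin d1 → ℤ) × (Fin d2 → ℤ) =>
        multisumTerm A1 B1 a1' a1'' b1' b1'' n p.1
        * multisumTerm A2 B2 a2' a2'' b2' b2'' n p.2)
    rw [finsum_congr h1, h2,
      finsum_mul_finsum _ _ (hfin1 n) (hfin2 n), ← hsum1 n, ← hsum2 n]

section SupportBound

variable {r d : ℕ} (A B : Fin r → Fin d → ℤ) (a' a'' b' b'' : Fin r → ℤ)

/-- Evaluation of an integer linear form. -/
def lin (ρ : Fin d → ℤ) (v : Fin d → ℤ) : ℤ := ∑ j, ρ j * v j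

lemma lin_add_smul (ρ v w : Fin d → ℤ) (k : ℤ) :
    lin ρ (fun j => v j + k * w j) = lin ρ v + k * lin ρ w := by
  unfold lin
  rw [Finset.mul_sum, ← Finset.sum_add_distrib]
  apply Finset.sum_congr rfl
  intro j _
  ring

lemma lin_neg (ρ v : Fin d → ℤ) : lin (fun j => -ρ j) v = - lin ρ v := by
  simp [lin, Finset.sum_neg_distrib]

lemma lin_sub (ρ ρ' v : Fin d → ℤ) :
    lin (fun j => ρ j - ρ' j) v = lin ρ v - lin ρ' v := by
  simp [lin, sub_mul, Finset.sum_sub_distrib]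

def xf (i : Fin r) (n : ℕ) (v : Fin d → ℤ) : ℤ := lin (A i) v + a' i * (n : ℤ) + a'' i

def yf (i : Fin r) (n : ℕ) (v : Fin d → ℤ) : ℤ := lin (B i) v + b' i * (n : ℤ) + b'' i

lemma term_eq_prod (n : ℕ) (v : Fin d → ℤ) :
    multisumTerm A B a' a'' b' b'' n v
      = ∏ i, mbinom (xf A a' a'' i n v) (yf B b' b'' i n v) := rfl

lemma term_ne_zero_iff (n : ℕ) (v : Fin d → ℤ) :
    multisumTerm A B a' a'' b' b'' n v ≠ 0
      ↔ ∀ i, mbinom (xf A a' a'' i n v) (yf B b' b'' i n v) ≠ 0 := by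
  rw [term_eq_prod, Finset.prod_ne_zero_iff]
  exact ⟨fun h i => h i (Finset.mem_univ i), fun h i _ => h i⟩

/-- The pattern predicate: factors in `σ` are in the special case, others regular. -/
def Pat (σ : Finset (Fin r)) (n : ℕ) (v : Fin d → ℤ) : Prop :=
  (∀ i ∈ σ, xf A a' a'' i n v = -1 ∧ yf B b' b'' i n v = 0) ∧
  (∀ i ∉ σ, 0 ≤ yf B b' b'' i n v ∧ yf B b' b'' i n v ≤ xf A a' a'' i n v)

lemma alive_pattern {n : ℕ} {v : Fin d → ℤ}
    (h : multisumTerm A B a' a'' b' b'' n v ≠ 0) :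
    Pat A B a' a'' b' b''
      (Finset.univ.filter (fun i =>
        ¬(0 ≤ yf B b' b'' i n v ∧ yf B b' b'' i n v ≤ xf A a' a'' i n v))) n v := by
  rw [term_ne_zero_iff] at h
  constructor
  · intro i hi
    simp only [Finset.mem_filter] at hi
    rcases mbinom_ne_zero_iff.1 (h i) with hreg | hsp
    · exact absurd hreg hi.2
    · exact ⟨hsp.1, hsp.2⟩
  · intro i hi
    simp only [Finset.mem_filter, Finset.mem_univ, true_and, not_not] at hi
    exact hi

lemma pattern_alive {σ : Finset (Fin r)} {n : ℕ} {v : Fin d → ℤ}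
    (h : Pat A B a' a'' b' b'' σ n v) :
    multisumTerm A B a' a'' b' b'' n v ≠ 0 := by
  rw [term_ne_zero_iff]
  intro i
  by_cases hi : i ∈ σ
  · exact mbinom_ne_zero_iff.2 (Or.inr (h.1 i hi))
  · exact mbinom_ne_zero_iff.2 (Or.inl (h.2 i hi))

/-- The rows (with affine lower bounds) valid on pattern `σ`:
each entry is `(ρ, β, γ)` with `β·n + γ ≤ ρ·v` for all `v` in the pattern. -/
def rowsZ (σ : Finset (Fin r)) : List ((Fin d → ℤ) × ℤ × ℤ) :=
  (List.finRange r).flatMap (fun i =>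
    if i ∈ σ then
      [(A i, (-a' i, -1 - a'' i)), (fun j => -A i j, (a' i, 1 + a'' i)),
       (B i, (-b' i, -b'' i)), (fun j => -B i j, (b' i, b'' i))]
    else
      [(B i, (-b' i, -b'' i)),
       (fun j => A i j - B i j, (b' i - a' i, b'' i - a'' i))])

lemma rowsZ_spec (σ : Finset (Fin r)) :
    ∀ p ∈ rowsZ A B a' a'' b' b'' σ, ∀ (n : ℕ) (v : Fin d → ℤ),
      Pat A B a' a'' b' b'' σ n v → p.2.1 * (n : ℤ) + p.2.2 ≤ lin p.1 v := by
  intro p hp n v hP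
  rw [rowsZ, List.mem_flatMap] at hp
  obtain ⟨i, -, hpi⟩ := hp
  by_cases hi : i ∈ σ
  · rw [if_pos hi] at hpi
    obtain ⟨hx, hy⟩ := hP.1 i hi
    unfold xf at hx
    unfold yf at hy
    simp only [List.mem_cons, List.mem_singleton, List.not_mem_nil, or_false] at hpi
    rcases hpi with rfl | rfl | rfl | rfl
    · simp only; linarith
    · simp only [lin_neg]; linarith
    · simp only; linarith
    · simp only [lin_neg]; linarith
  · rw [if_neg hi] at hpi
    obtain ⟨hy0, hyx⟩ := hP.2 i hi
    unfold xf at hyx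
    unfold yf at hy0 hyx
    simp only [List.mem_cons, List.mem_singleton, List.not_mem_nil, or_false] at hpi
    rcases hpi with rfl | rfl
    · simp only; linarith
    · simp only [lin_sub]; linarith

end SupportBound

section SupportBound2

variable {r d : ℕ} (A B : Fin r → Fin d → ℤ) (a' a'' b' b'' : Fin r → ℤ)

lemma realized_trivial (σ : Finset (Fin r))
    (hfin : ∀ n, (Function.support (multisumTerm A B a' a'' b' b'' n)).Finite)
    (n0 : ℕ) (v0 : Fin d → ℤ) (hP0 : Pat A B a' a'' b' b'' σ n0 v0) :
    ∀ w : Fin d → ℤ, (∀ p ∈ rowsZ A B a' a'' b' b'' σ, 0 ≤ lin p.1 w) → w = 0 := by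
  intro w hw
  by_contra hw0
  obtain ⟨j0, hj0⟩ : ∃ j, w j ≠ 0 := by
    by_contra h; push_neg at h; exact hw0 (funext h)
  -- membership of the basic rows
  have hmemrow : ∀ (i : Fin r) (q : (Fin d → ℤ) × ℤ × ℤ),
      (i ∈ σ → q ∈ [(A i, (-a' i, -1 - a'' i)), (fun j => -A i j, (a' i, 1 + a'' i)),
          (B i, (-b' i, -b'' i)), (fun j => -B i j, (b' i, b'' i))]) →
      (i ∉ σ → q ∈ [(B i, (-b' i, -b'' i)),
          (fun j => A i j - B i j, (b' i - a' i, b'' i - a'' i))]) →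
      q ∈ rowsZ A B a' a'' b' b'' σ := by
    intro i q h1 h2
    rw [rowsZ, List.mem_flatMap]
    refine ⟨i, List.mem_finRange i, ?_⟩
    by_cases hi : i ∈ σ
    · rw [if_pos hi]; exact h1 hi
    · rw [if_neg hi]; exact h2 hi
  have hfacts : ∀ i : Fin r,
      (i ∈ σ → lin (A i) w = 0 ∧ lin (B i) w = 0) ∧
      (i ∉ σ → 0 ≤ lin (B i) w ∧ lin (B i) w ≤ lin (A i) w) := by
    intro i
    constructor
    · intro hi
      have h1 := hw _ (hmemrow i (A i, (-a' i, -1 - a'' i))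
        (fun _ => by simp) (fun h => absurd hi h))
      have h2 := hw _ (hmemrow i (fun j => -A i j, (a' i, 1 + a'' i))
        (fun _ => by simp) (fun h => absurd hi h))
      have h3 := hw _ (hmemrow i (B i, (-b' i, -b'' i))
        (fun _ => by simp) (fun h => absurd hi h))
      have h4 := hw _ (hmemrow i (fun j => -B i j, (b' i, b'' i))
        (fun _ => by simp) (fun h => absurd hi h))
      rw [lin_neg] at h2 h4
      constructor <;> linarith
    · intro hi
      have h1 := hw _ (hmemrow i (B i, (-b' i, -b'' i))
        (fun h => absurd h hi) (fun _ => by simp))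
      have h2 := hw _ (hmemrow i (fun j => A i j - B i j, (b' i - a' i, b'' i - a'' i))
        (fun h => absurd h hi) (fun _ => by simp))
      rw [lin_sub] at h2
      constructor <;> linarith
  have hmem : ∀ k : ℕ, (fun j => v0 j + (k : ℤ) * w j)
      ∈ Function.support (multisumTerm A B a' a'' b' b'' n0) := by
    intro k
    rw [Function.mem_support]
    apply pattern_alive A B a' a'' b' b'' (σ := σ)
    have hk : (0:ℤ) ≤ (k:ℤ) := Int.natCast_nonneg k
    constructor
    · intro i hi
      obtain ⟨hA0, hB0⟩ := (hfacts i).1 hi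
      obtain ⟨hx, hy⟩ := hP0.1 i hi
      unfold xf yf at *
      rw [lin_add_smul, hA0, lin_add_smul, hB0]
      constructor <;> linarith
    · intro i hi
      obtain ⟨hB0, hAB⟩ := (hfacts i).2 hi
      obtain ⟨hy0, hyx⟩ := hP0.2 i hi
      unfold xf yf at *
      rw [lin_add_smul, lin_add_smul]
      constructor
      · nlinarith
      · nlinarith
  have hinj : Function.Injective (fun k : ℕ => (fun j => v0 j + (k : ℤ) * w j)) := by
    intro k1 k2 h
    have := congrFun h j0
    simp only at this
    have hk : (k1 : ℤ) = (k2 : ℤ) := by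
      have h2 : (k1 : ℤ) * w j0 = (k2 : ℤ) * w j0 := by linarith
      exact mul_right_cancel₀ hj0 h2
    exact_mod_cast hk
  exact (hfin n0).not_infinite (Set.infinite_of_injective_forall_mem hinj hmem)

end SupportBound2

section SupportBound3

variable {r d : ℕ} (A B : Fin r → Fin d → ℤ) (a' a'' b' b'' : Fin r → ℤ)

lemma pattern_bound
    (hfin : ∀ n, (Function.support (multisumTerm A B a' a'' b' b'' n)).Finite)
    (σ : Finset (Fin r)) :
    ∃ C : ℕ, ∀ (n : ℕ) (v : Fin d → ℤ), Pat A B a' a'' b' b'' σ n v →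
      ∀ j, (v j).natAbs ≤ C * (n + 1) := by
  classical
  by_cases hreal : ∃ n v, Pat A B a' a'' b' b'' σ n v
  swap
  · exact ⟨0, fun n v hP => absurd ⟨n, v, hP⟩ hreal⟩
  obtain ⟨n0, v0, hP0⟩ := hreal
  have htrivZ := realized_trivial A B a' a'' b' b'' σ hfin n0 v0 hP0
  set LQ : List (Vec d × ℚ) := (rowsZ A B a' a'' b' b'' σ).map
    (fun p => ((fun j => (p.1 j : ℚ)), |(p.2.1 : ℚ)| + |(p.2.2 : ℚ)| + 1)) with hLQ
  have htrivQ : ∀ w : Vec d, (∀ p ∈ LQ, 0 ≤ dot p.1 w) → w = 0 := by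
    intro w hw
    set D : ℤ := ∏ j, ((w j).den : ℤ) with hD
    have hDpos : 0 < D := Finset.prod_pos (fun j _ => by exact_mod_cast (w j).pos)
    set w' : Fin d → ℤ := fun j => (w j).num * (D / ((w j).den : ℤ)) with hw'
    have hcast : ∀ j, (w' j : ℚ) = w j * (D : ℚ) := by
      intro j
      have hdvd : ((w j).den : ℤ) ∣ D := Finset.dvd_prod_of_mem _ (Finset.mem_univ j)
      have h1 : ((w j).den : ℤ) * (D / ((w j).den : ℤ)) = D := Int.mul_ediv_cancel' hdvd
      have h1q : ((w j).den : ℚ) * (((D / ((w j).den : ℤ)) : ℤ) : ℚ) = (D : ℚ) := by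
        exact_mod_cast congrArg (fun z : ℤ => (z : ℚ)) h1
      have hden : ((w j).den : ℚ) ≠ 0 := by
        exact_mod_cast (w j).den_nz
      rw [show w j = ((w j).num : ℚ) / ((w j).den : ℚ) from (Rat.num_div_den _).symm]
      rw [div_mul_eq_mul_div, eq_div_iff hden]
      rw [show ((w' j : ℚ)) = ((w j).num : ℚ) * (((D / ((w j).den : ℤ)) : ℤ) : ℚ) by
        push_cast [hw']; ring]
      linear_combination ((w j).num : ℚ) * h1q
    have hw'rows : ∀ p ∈ rowsZ A B a' a'' b' b'' σ, 0 ≤ lin p.1 w' := by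
      intro p hp
      have h := hw _ (List.mem_map_of_mem hp)
      have h2 : (0:ℚ) ≤ dot (fun j => (p.1 j : ℚ)) w * (D : ℚ) := by
        apply mul_nonneg h
        exact_mod_cast hDpos.le
      have h3 : dot (fun j => (p.1 j : ℚ)) w * (D : ℚ) = ((lin p.1 w' : ℤ) : ℚ) := by
        rw [dot, lin]
        push_cast
        rw [Finset.sum_mul]
        apply Finset.sum_congr rfl
        intro j _
        rw [mul_assoc, ← hcast j]
      rw [h3] at h2
      exact_mod_cast h2
    have hz := htrivZ w' hw'rows
    funext j
    have : (w' j : ℚ) = 0 := by rw [hz]; simp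
    rw [hcast j] at this
    rcases mul_eq_zero.1 this with h | h
    · exact h
    · exact absurd h (by exact_mod_cast hDpos.ne')
  have hbnd : ∀ j : Fin d, ∃ Cj : ℕ, ∀ (n : ℕ) (v : Fin d → ℤ),
      Pat A B a' a'' b' b'' σ n v → (v j).natAbs ≤ Cj * (n + 1) := by
    intro j
    obtain ⟨c1, hc1⟩ := inConeC_of_trivial LQ htrivQ (fun j' => if j' = j then 1 else 0)
    obtain ⟨c2, hc2⟩ := inConeC_of_trivial LQ htrivQ (fun j' => if j' = j then -1 else 0)
    obtain ⟨Cj, hCj⟩ := exists_nat_ge (max c1 c2)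
    refine ⟨Cj, ?_⟩
    intro n v hP
    have hs : (0:ℚ) ≤ (n : ℚ) + 1 := by positivity
    have heval : ∀ p ∈ LQ, -(p.2 * ((n : ℚ) + 1)) ≤ dot p.1 (fun j' => (v j' : ℚ)) := by
      intro p hp
      rw [hLQ, List.mem_map] at hp
      obtain ⟨q, hq, rfl⟩ := hp
      have hspec := rowsZ_spec A B a' a'' b' b'' σ q hq n v hP
      have hdot : dot (fun j' => (q.1 j' : ℚ)) (fun j' => (v j' : ℚ))
          = ((lin q.1 v : ℤ) : ℚ) := by
        rw [dot, lin]; push_cast; rfl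
      rw [hdot]
      simp only
      have hspecq : (q.2.1 : ℚ) * (n : ℚ) + (q.2.2 : ℚ) ≤ ((lin q.1 v : ℤ) : ℚ) := by
        exact_mod_cast hspec
      have hb1 : -|(q.2.1 : ℚ)| ≤ (q.2.1 : ℚ) := neg_abs_le _
      have hb2 : -|(q.2.2 : ℚ)| ≤ (q.2.2 : ℚ) := neg_abs_le _
      have hb3 : (0:ℚ) ≤ |(q.2.1 : ℚ)| := abs_nonneg _
      have hb4 : (0:ℚ) ≤ |(q.2.2 : ℚ)| := abs_nonneg _
      have hn : (0:ℚ) ≤ (n : ℚ) := Nat.cast_nonneg n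
      nlinarith
    have h1 := InConeC_eval LQ _ c1 (fun j' => (v j' : ℚ)) ((n : ℚ) + 1) hs hc1 heval
    have h2 := InConeC_eval LQ _ c2 (fun j' => (v j' : ℚ)) ((n : ℚ) + 1) hs hc2 heval
    have hd1 : dot (fun j' => if j' = j then (1:ℚ) else 0) (fun j' => (v j' : ℚ))
        = (v j : ℚ) := by
      rw [dot]
      rw [Finset.sum_eq_single j]
      · simp
      · intro b _ hb; simp [hb]
      · intro h; exact absurd (Finset.mem_univ j) h
    have hd2 : dot (fun j' => if j' = j then (-1:ℚ) else 0) (fun j' => (v j' : ℚ))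
        = -(v j : ℚ) := by
      rw [dot]
      rw [Finset.sum_eq_single j]
      · simp
      · intro b _ hb; simp [hb]
      · intro h; exact absurd (Finset.mem_univ j) h
    rw [hd1] at h1
    rw [hd2] at h2
    have hmax : (max c1 c2) * ((n:ℚ)+1) ≤ (Cj : ℚ) * ((n:ℚ)+1) :=
      mul_le_mul_of_nonneg_right hCj hs
    have hub : ((v j).natAbs : ℚ) ≤ (Cj : ℚ) * ((n:ℚ)+1) := by
      have habs : ((v j).natAbs : ℚ) = |(v j : ℚ)| := by
        rw [Nat.cast_natAbs, Int.cast_abs]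
      rw [habs, abs_le]
      constructor
      · have : c1 * ((n:ℚ)+1) ≤ (Cj:ℚ) * ((n:ℚ)+1) :=
          le_trans (mul_le_mul_of_nonneg_right (le_max_left c1 c2) hs) hmax
        linarith
      · have : c2 * ((n:ℚ)+1) ≤ (Cj:ℚ) * ((n:ℚ)+1) :=
          le_trans (mul_le_mul_of_nonneg_right (le_max_right c1 c2) hs) hmax
        linarith
    have : ((v j).natAbs : ℚ) ≤ ((Cj * (n+1) : ℕ) : ℚ) := by push_cast; linarith
    exact_mod_cast this
  choose CjF hCjF using hbnd
  refine ⟨Finset.univ.sup CjF, fun n v hP j => le_trans (hCjF j n v hP) ?_⟩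
  exact Nat.mul_le_mul_right _ (Finset.le_sup (Finset.mem_univ j))

theorem support_bound
    (hfin : ∀ n, (Function.support (multisumTerm A B a' a'' b' b'' n)).Finite) :
    ∃ C : ℕ, ∀ (n : ℕ) (v : Fin d → ℤ), multisumTerm A B a' a'' b' b'' n v ≠ 0 →
      ∀ j, (v j).natAbs ≤ C * (n + 1) := by
  classical
  have hσ := fun σ => pattern_bound A B a' a'' b' b'' hfin σ
  choose Cf hCf using hσ
  refine ⟨Finset.univ.sup Cf, ?_⟩
  intro n v hv j
  have hP := alive_pattern A B a' a'' b' b'' hv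
  refine le_trans (hCf _ n v hP j) ?_
  exact Nat.mul_le_mul_right _ (Finset.le_sup (Finset.mem_univ _))

end SupportBound3

section AddConstr

/-- Bundled multisum representation data. -/
structure RepData (r d : ℕ) where
  A : Fin r → Fin d → ℤ
  B : Fin r → Fin d → ℤ
  a' : Fin r → ℤ
  a'' : Fin r → ℤ
  b' : Fin r → ℤ
  b'' : Fin r → ℤ

def term {r d : ℕ} (R : RepData r d) : ℕ → (Fin d → ℤ) → ℕ :=
  multisumTerm R.A R.B R.a' R.a'' R.b' R.b''

/-- Variable index type for the sum construction: `v1`-block, `v2`-block, `τ`, `η`. -/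
abbrev AK (d1 d2 : ℕ) := Sum (Fin d1) (Sum (Fin d2) (Sum Unit Unit))

/-- Factor index type for the sum construction. -/
abbrev AI (r1 r2 d1 d2 : ℕ) :=
  Sum (Fin r1) (Sum (Fin r2) (Sum (Fin d1 × Bool) (Sum (Fin d2 × Bool) (Fin 6))))

variable {r1 d1 r2 d2 : ℕ}

def tauc (w : AK d1 d2 → ℤ) : ℤ := w (Sum.inr (Sum.inr (Sum.inl ())))
def etac (w : AK d1 d2 → ℤ) : ℤ := w (Sum.inr (Sum.inr (Sum.inr ())))

def mkRow (f1 : Fin d1 → ℤ) (f2 : Fin d2 → ℤ) (cτ cη : ℤ) : AK d1 d2 → ℤ :=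
  Sum.elim f1 (Sum.elim f2 (Sum.elim (fun _ => cτ) (fun _ => cη)))

def sgn (b : Bool) : ℤ := if b then 1 else -1

def single {m : ℕ} (j : Fin m) (c : ℤ) : Fin m → ℤ := fun j' => if j' = j then c else 0

lemma single_eval {m : ℕ} (j : Fin m) (c : ℤ) (v : Fin m → ℤ) :
    ∑ j', single j c j' * v j' = c * v j := by
  unfold single
  rw [Finset.sum_eq_single j]
  · simp
  · intro b _ hb; simp [hb]
  · intro h; exact absurd (Finset.mem_univ j) h

lemma zero_eval {m : ℕ} (v : Fin m → ℤ) : ∑ j', (0 : Fin m → ℤ) j' * v j' = 0 := by simp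

lemma mkRow_eval (f1 : Fin d1 → ℤ) (f2 : Fin d2 → ℤ) (cτ cη : ℤ) (w : AK d1 d2 → ℤ) :
    ∑ j, mkRow f1 f2 cτ cη j * w j
      = (∑ j, f1 j * w (Sum.inl j)) + (∑ k, f2 k * w (Sum.inr (Sum.inl k)))
        + cτ * tauc w + cη * etac w := by
  unfold mkRow tauc etac
  rw [Fintype.sum_sum_type, Fintype.sum_sum_type, Fintype.sum_sum_type]
  simp
  ring

/-- the `X`-rows of the combined representation -/
def SX (R1 : RepData r1 d1) (R2 : RepData r2 d2) (Cf Cg : ℕ) : AI r1 r2 d1 d2 → AK d1 d2 → ℤ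
  | .inl i => mkRow (R1.A i) 0 |R1.a'' i| |R1.a' i|
  | .inr (.inl i) => mkRow 0 (R2.A i) (-|R2.a'' i|) (-|R2.a' i|)
  | .inr (.inr (.inl (j, b))) => mkRow (single j (-(sgn b))) 0 0 (-(Cf : ℤ))
  | .inr (.inr (.inr (.inl (k, b)))) => mkRow 0 (single k (-(sgn b))) 0 (Cg : ℤ)
  | .inr (.inr (.inr (.inr 0))) => mkRow 0 0 1 0
  | .inr (.inr (.inr (.inr 1))) => mkRow 0 0 (-1) 0
  | .inr (.inr (.inr (.inr 2))) => mkRow 0 0 0 (-1)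
  | .inr (.inr (.inr (.inr 3))) => mkRow 0 0 0 1
  | .inr (.inr (.inr (.inr 4))) => mkRow 0 0 1 1
  | .inr (.inr (.inr (.inr 5))) => mkRow 0 0 (-1) (-1)

def SY (R1 : RepData r1 d1) (R2 : RepData r2 d2) (Cf Cg : ℕ) : AI r1 r2 d1 d2 → AK d1 d2 → ℤ
  | .inl i => mkRow (R1.B i) 0 (R1.b' i - R1.b'' i) (-R1.b' i)
  | .inr (.inl i) => mkRow 0 (R2.B i) (R2.b'' i - R2.b' i) (R2.b' i)
  | .inr (.inr (.inl (j, b))) => mkRow (single j (-(sgn b))) 0 0 (-(Cf : ℤ))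
  | .inr (.inr (.inr (.inl (k, b)))) => mkRow 0 (single k (-(sgn b))) 0 (Cg : ℤ)
  | .inr (.inr (.inr (.inr 0))) => mkRow 0 0 1 0
  | .inr (.inr (.inr (.inr 1))) => mkRow 0 0 (-1) 0
  | .inr (.inr (.inr (.inr 2))) => mkRow 0 0 0 (-1)
  | .inr (.inr (.inr (.inr 3))) => mkRow 0 0 0 1
  | .inr (.inr (.inr (.inr 4))) => mkRow 0 0 0 1
  | .inr (.inr (.inr (.inr 5))) => mkRow 0 0 0 (-1)

def Sx' (R1 : RepData r1 d1) (R2 : RepData r2 d2) (Cf Cg : ℕ) : AI r1 r2 d1 d2 → ℤ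
  | .inl i => R1.a' i + |R1.a' i|
  | .inr (.inl i) => R2.a' i
  | .inr (.inr (.inl _)) => 0
  | .inr (.inr (.inr (.inl _))) => (Cg : ℤ)
  | .inr (.inr (.inr (.inr 0))) => 0
  | .inr (.inr (.inr (.inr 1))) => 0
  | .inr (.inr (.inr (.inr 2))) => 0
  | .inr (.inr (.inr (.inr 3))) => 1
  | .inr (.inr (.inr (.inr 4))) => 1
  | .inr (.inr (.inr (.inr 5))) => 0

def Sx'' (R1 : RepData r1 d1) (R2 : RepData r2 d2) (Cf Cg : ℕ) : AI r1 r2 d1 d2 → ℤ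
  | .inl i => R1.a'' i + |R1.a' i| + |R1.a'' i|
  | .inr (.inl i) => R2.a'' i
  | .inr (.inr (.inl _)) => 0
  | .inr (.inr (.inr (.inl _))) => (Cg : ℤ)
  | .inr (.inr (.inr (.inr 0))) => 1
  | .inr (.inr (.inr (.inr 1))) => 0
  | .inr (.inr (.inr (.inr 2))) => 0
  | .inr (.inr (.inr (.inr 3))) => 1
  | .inr (.inr (.inr (.inr 4))) => 1
  | .inr (.inr (.inr (.inr 5))) => -1

def Sy' (R1 : RepData r1 d1) (R2 : RepData r2 d2) (Cf Cg : ℕ) : AI r1 r2 d1 d2 → ℤ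
  | .inl _ => 0
  | .inr (.inl i) => R2.b' i
  | .inr (.inr (.inl _)) => 0
  | .inr (.inr (.inr (.inl _))) => (Cg : ℤ)
  | .inr (.inr (.inr (.inr 0))) => 0
  | .inr (.inr (.inr (.inr 1))) => 0
  | .inr (.inr (.inr (.inr 2))) => 0
  | .inr (.inr (.inr (.inr 3))) => 1
  | .inr (.inr (.inr (.inr 4))) => 1
  | .inr (.inr (.inr (.inr 5))) => 0

def Sy'' (R1 : RepData r1 d1) (R2 : RepData r2 d2) (Cf Cg : ℕ) : AI r1 r2 d1 d2 → ℤ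
  | .inl _ => 0
  | .inr (.inl i) => R2.b'' i
  | .inr (.inr (.inl _)) => 0
  | .inr (.inr (.inr (.inl _))) => (Cg : ℤ)
  | .inr (.inr (.inr (.inr 0))) => 1
  | .inr (.inr (.inr (.inr 1))) => 0
  | .inr (.inr (.inr (.inr 2))) => 0
  | .inr (.inr (.inr (.inr 3))) => 1
  | .inr (.inr (.inr (.inr 4))) => 1
  | .inr (.inr (.inr (.inr 5))) => 0

/-- the combined term -/
def ATerm (R1 : RepData r1 d1) (R2 : RepData r2 d2) (Cf Cg : ℕ) (n : ℕ)
    (w : AK d1 d2 → ℤ) : ℕ :=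
  GTerm (SX R1 R2 Cf Cg) (SY R1 R2 Cf Cg) (Sx' R1 R2 Cf Cg) (Sx'' R1 R2 Cf Cg)
    (Sy' R1 R2 Cf Cg) (Sy'' R1 R2 Cf Cg) n w

/-- mode-A embedding -/
def uA (n : ℕ) (v1 : Fin d1 → ℤ) : AK d1 d2 → ℤ :=
  Sum.elim v1 (Sum.elim (fun _ => 0) (Sum.elim (fun _ => -1) (fun _ => -((n : ℤ) + 1))))

/-- mode-B embedding -/
def uB (n : ℕ) (v2 : Fin d2 → ℤ) : AK d1 d2 → ℤ :=
  Sum.elim (fun _ => 0) (Sum.elim v2 (Sum.elim (fun _ => 0) (fun _ => 0)))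

end AddConstr

section AddConstr2

variable {r1 d1 r2 d2 : ℕ}

lemma mbinom_one_of_yzero {x y : ℤ} (hy : y = 0) (hx : 0 ≤ x) : mbinom x y = 1 := by
  subst hy; exact mbinom_zero_right hx

lemma mbinom_one_special {x y : ℤ} (hx : x = -1) (hy : y = 0) : mbinom x y = 1 := by
  subst hx; subst hy; exact mbinom_special

lemma mbinom_one_diag {x y : ℤ} (hxy : x = y) (hx : 0 ≤ x) : mbinom x y = 1 := by
  subst hxy; exact mbinom_diag_nonneg hx

lemma mbinom_zero_diag {x y : ℤ} (hxy : x = y) (hx : x < 0) : mbinom x y = 0 := by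
  subst hxy; rw [mbinom_diag, if_neg (by omega)]

lemma prod_AI (F : AI r1 r2 d1 d2 → ℕ) :
    ∏ i, F i = (∏ i : Fin r1, F (.inl i)) * ((∏ i : Fin r2, F (.inr (.inl i)))
      * ((∏ p : Fin d1 × Bool, F (.inr (.inr (.inl p))))
        * ((∏ p : Fin d2 × Bool, F (.inr (.inr (.inr (.inl p)))))
          * (∏ m : Fin 6, F (.inr (.inr (.inr (.inr m)))))))) := by
  rw [Fintype.prod_sum_type, Fintype.prod_sum_type, Fintype.prod_sum_type,
    Fintype.prod_sum_type]

variable (R1 : RepData r1 d1) (R2 : RepData r2 d2) (Cf Cg : ℕ)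

lemma ATerm_uA (n : ℕ) (v1 : Fin d1 → ℤ)
    (hb : ∀ v : Fin d1 → ℤ, term R1 n v ≠ 0 → ∀ j, (v j).natAbs ≤ Cf * (n + 1)) :
    ATerm R1 R2 Cf Cg n (uA n v1) = term R1 n v1 := by
  by_cases hbox : ∀ j, (v1 j).natAbs ≤ Cf * (n + 1)
  · unfold ATerm GTerm
    rw [prod_AI]
    have hf : (∏ i : Fin r1, mbinom
          ((∑ j, SX R1 R2 Cf Cg (.inl i) j * uA n v1 j) + Sx' R1 R2 Cf Cg (.inl i) * (n:ℤ)
            + Sx'' R1 R2 Cf Cg (.inl i))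
          ((∑ j, SY R1 R2 Cf Cg (.inl i) j * uA n v1 j) + Sy' R1 R2 Cf Cg (.inl i) * (n:ℤ)
            + Sy'' R1 R2 Cf Cg (.inl i)))
        = term R1 n v1 := by
      unfold term multisumTerm
      apply Finset.prod_congr rfl
      intro i _
      congr 1
      · simp only [SX, Sx', Sx'', mkRow_eval]
        simp [uA, tauc, etac]
        ring
      · simp only [SY, Sy', Sy'', mkRow_eval]
        simp [uA, tauc, etac]
        ring
    rw [hf]
    have hg : (∏ i : Fin r2, mbinom
          ((∑ j, SX R1 R2 Cf Cg (.inr (.inl i)) j * uA n v1 j)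
            + Sx' R1 R2 Cf Cg (.inr (.inl i)) * (n:ℤ) + Sx'' R1 R2 Cf Cg (.inr (.inl i)))
          ((∑ j, SY R1 R2 Cf Cg (.inr (.inl i)) j * uA n v1 j)
            + Sy' R1 R2 Cf Cg (.inr (.inl i)) * (n:ℤ) + Sy'' R1 R2 Cf Cg (.inr (.inl i)))) = 1 := by
      apply Finset.prod_eq_one
      intro i _
      apply mbinom_one_of_yzero
      · simp only [SY, Sy', Sy'', mkRow_eval]
        simp [uA, tauc, etac]
        ring
      · simp only [SX, Sx', Sx'', mkRow_eval]
        simp [uA, tauc, etac]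
        nlinarith [neg_abs_le (R2.a' i), neg_abs_le (R2.a'' i), abs_nonneg (R2.a' i),
          abs_nonneg (R2.a'' i), Int.ofNat_nonneg n]
    rw [hg]
    have hp1 : (∏ p : Fin d1 × Bool, mbinom
          ((∑ j, SX R1 R2 Cf Cg (.inr (.inr (.inl p))) j * uA n v1 j)
            + Sx' R1 R2 Cf Cg (.inr (.inr (.inl p))) * (n:ℤ) + Sx'' R1 R2 Cf Cg (.inr (.inr (.inl p))))
          ((∑ j, SY R1 R2 Cf Cg (.inr (.inr (.inl p))) j * uA n v1 j)
            + Sy' R1 R2 Cf Cg (.inr (.inr (.inl p))) * (n:ℤ) + Sy'' R1 R2 Cf Cg (.inr (.inr (.inl p)))))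
        = 1 := by
      apply Finset.prod_eq_one
      rintro ⟨j, b⟩ _
      apply mbinom_one_diag rfl
      have hj := hbox j
      rcases b <;>
      · simp only [SX, Sx', Sx'', mkRow_eval, sgn]
        simp [uA, tauc, etac, single_eval]
        have hring : ((Cf:ℤ)) * ((n:ℤ) + 1) = (Cf:ℤ) * (((n+1 : ℕ)) : ℤ) := by
          push_cast; ring
        have hring2 : ((Cf:ℤ)) * (-1 + -(n:ℤ)) = -((Cf:ℤ) * ((n:ℤ) + 1)) := by ring
        omega
    rw [hp1]
    have hp2 : (∏ p : Fin d2 × Bool, mbinom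
          ((∑ j, SX R1 R2 Cf Cg (.inr (.inr (.inr (.inl p)))) j * uA n v1 j)
            + Sx' R1 R2 Cf Cg (.inr (.inr (.inr (.inl p)))) * (n:ℤ)
            + Sx'' R1 R2 Cf Cg (.inr (.inr (.inr (.inl p)))))
          ((∑ j, SY R1 R2 Cf Cg (.inr (.inr (.inr (.inl p)))) j * uA n v1 j)
            + Sy' R1 R2 Cf Cg (.inr (.inr (.inr (.inl p)))) * (n:ℤ)
            + Sy'' R1 R2 Cf Cg (.inr (.inr (.inr (.inl p)))))) = 1 := by
      apply Finset.prod_eq_one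
      rintro ⟨k, b⟩ _
      apply mbinom_one_diag rfl
      rcases b <;>
      · simp only [SX, Sx', Sx'', mkRow_eval, sgn]
        simp [uA, tauc, etac, single_eval]
        have hring : ((Cg:ℤ)) * (-1 + -(n:ℤ)) + (Cg:ℤ) * (n:ℤ) + (Cg:ℤ) = 0 := by ring
        omega
    rw [hp2]
    have hm : (∏ m : Fin 6, mbinom
          ((∑ j, SX R1 R2 Cf Cg (.inr (.inr (.inr (.inr m)))) j * uA n v1 j)
            + Sx' R1 R2 Cf Cg (.inr (.inr (.inr (.inr m)))) * (n:ℤ)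
            + Sx'' R1 R2 Cf Cg (.inr (.inr (.inr (.inr m)))))
          ((∑ j, SY R1 R2 Cf Cg (.inr (.inr (.inr (.inr m)))) j * uA n v1 j)
            + Sy' R1 R2 Cf Cg (.inr (.inr (.inr (.inr m)))) * (n:ℤ)
            + Sy'' R1 R2 Cf Cg (.inr (.inr (.inr (.inr m)))))) = 1 := by
      apply Finset.prod_eq_one
      intro m _
      fin_cases m
      · apply mbinom_one_diag rfl
        simp only [SX, Sx', Sx'', mkRow_eval]
        simp [uA, tauc, etac]
      · apply mbinom_one_diag rfl
        simp only [SX, Sx', Sx'', mkRow_eval]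
        simp [uA, tauc, etac]
      · apply mbinom_one_diag rfl
        simp only [SX, Sx', Sx'', mkRow_eval]
        simp [uA, tauc, etac]
        omega
      · apply mbinom_one_diag rfl
        simp only [SX, Sx', Sx'', mkRow_eval]
        simp [uA, tauc, etac]
      · apply mbinom_one_special
        · simp only [SX, Sx', Sx'', mkRow_eval]
          simp [uA, tauc, etac]
          try ring
        · simp only [SY, Sy', Sy'', mkRow_eval]
          simp [uA, tauc, etac]
          try ring
      · apply mbinom_one_diag
        · simp only [SX, SY, Sx', Sx'', Sy', Sy'', mkRow_eval]
          simp [uA, tauc, etac]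
          try ring
        · simp only [SX, Sx', Sx'', mkRow_eval]
          simp [uA, tauc, etac]
          try omega
    rw [hm]
    ring
  · -- out of the box: both sides are zero
    push_neg at hbox
    obtain ⟨j0, hj0⟩ := hbox
    have hrhs : term R1 n v1 = 0 := by
      by_contra hne
      exact absurd (hb v1 hne j0) (by omega)
    rw [hrhs]
    unfold ATerm GTerm
    apply Finset.prod_eq_zero
      (Finset.mem_univ ((.inr (.inr (.inl (j0, decide (0 ≤ v1 j0))))) : AI r1 r2 d1 d2))
    apply mbinom_zero_diag rfl
    rcases hsgn : decide (0 ≤ v1 j0) <;>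
    · simp only [SX, Sx', Sx'', mkRow_eval, sgn, hsgn]
      simp [uA, tauc, etac, single_eval]
      simp at hsgn
      have hring : ((Cf:ℤ)) * ((n:ℤ) + 1) = (Cf:ℤ) * (((n+1 : ℕ)) : ℤ) := by
        push_cast; ring
      have hring2 : ((Cf:ℤ)) * (-1 + -(n:ℤ)) = -((Cf:ℤ) * ((n:ℤ) + 1)) := by ring
      omega

end AddConstr2

section AddConstr3

variable {r1 d1 r2 d2 : ℕ} (R1 : RepData r1 d1) (R2 : RepData r2 d2) (Cf Cg : ℕ)

lemma ATerm_uB (n : ℕ) (v2 : Fin d2 → ℤ)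
    (hb : ∀ v : Fin d2 → ℤ, term R2 n v ≠ 0 → ∀ k, (v k).natAbs ≤ Cg * (n + 1)) :
    ATerm R1 R2 Cf Cg n (uB n v2) = term R2 n v2 := by
  by_cases hbox : ∀ k, (v2 k).natAbs ≤ Cg * (n + 1)
  · unfold ATerm GTerm
    rw [prod_AI]
    have hf : (∏ i : Fin r1, mbinom
          ((∑ j, SX R1 R2 Cf Cg (.inl i) j * uB n v2 j) + Sx' R1 R2 Cf Cg (.inl i) * (n:ℤ)
            + Sx'' R1 R2 Cf Cg (.inl i))
          ((∑ j, SY R1 R2 Cf Cg (.inl i) j * uB n v2 j) + Sy' R1 R2 Cf Cg (.inl i) * (n:ℤ)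
            + Sy'' R1 R2 Cf Cg (.inl i))) = 1 := by
      apply Finset.prod_eq_one
      intro i _
      apply mbinom_one_of_yzero
      · simp only [SY, Sy', Sy'', mkRow_eval]
        simp [uB, tauc, etac]
      · simp only [SX, Sx', Sx'', mkRow_eval]
        simp [uB, tauc, etac]
        nlinarith [neg_abs_le (R1.a' i), neg_abs_le (R1.a'' i), abs_nonneg (R1.a' i),
          abs_nonneg (R1.a'' i), Int.ofNat_nonneg n]
    rw [hf]
    have hg : (∏ i : Fin r2, mbinom
          ((∑ j, SX R1 R2 Cf Cg (.inr (.inl i)) j * uB n v2 j)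
            + Sx' R1 R2 Cf Cg (.inr (.inl i)) * (n:ℤ) + Sx'' R1 R2 Cf Cg (.inr (.inl i)))
          ((∑ j, SY R1 R2 Cf Cg (.inr (.inl i)) j * uB n v2 j)
            + Sy' R1 R2 Cf Cg (.inr (.inl i)) * (n:ℤ) + Sy'' R1 R2 Cf Cg (.inr (.inl i))))
        = term R2 n v2 := by
      unfold term multisumTerm
      apply Finset.prod_congr rfl
      intro i _
      congr 1
      · simp only [SX, Sx', Sx'', mkRow_eval]
        simp [uB, tauc, etac]
      · simp only [SY, Sy', Sy'', mkRow_eval]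
        simp [uB, tauc, etac]
    rw [hg]
    have hp1 : (∏ p : Fin d1 × Bool, mbinom
          ((∑ j, SX R1 R2 Cf Cg (.inr (.inr (.inl p))) j * uB n v2 j)
            + Sx' R1 R2 Cf Cg (.inr (.inr (.inl p))) * (n:ℤ)
            + Sx'' R1 R2 Cf Cg (.inr (.inr (.inl p))))
          ((∑ j, SY R1 R2 Cf Cg (.inr (.inr (.inl p))) j * uB n v2 j)
            + Sy' R1 R2 Cf Cg (.inr (.inr (.inl p))) * (n:ℤ)
            + Sy'' R1 R2 Cf Cg (.inr (.inr (.inl p))))) = 1 := by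
      apply Finset.prod_eq_one
      rintro ⟨j, b⟩ _
      apply mbinom_one_diag rfl
      rcases b <;>
      · simp only [SX, Sx', Sx'', mkRow_eval, sgn]
        simp [uB, tauc, etac, single_eval]
    rw [hp1]
    have hp2 : (∏ p : Fin d2 × Bool, mbinom
          ((∑ j, SX R1 R2 Cf Cg (.inr (.inr (.inr (.inl p)))) j * uB n v2 j)
            + Sx' R1 R2 Cf Cg (.inr (.inr (.inr (.inl p)))) * (n:ℤ)
            + Sx'' R1 R2 Cf Cg (.inr (.inr (.inr (.inl p)))))
          ((∑ j, SY R1 R2 Cf Cg (.inr (.inr (.inr (.inl p)))) j * uB n v2 j)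
            + Sy' R1 R2 Cf Cg (.inr (.inr (.inr (.inl p)))) * (n:ℤ)
            + Sy'' R1 R2 Cf Cg (.inr (.inr (.inr (.inl p)))))) = 1 := by
      apply Finset.prod_eq_one
      rintro ⟨k, b⟩ _
      apply mbinom_one_diag rfl
      have hk := hbox k
      rcases b <;>
      · simp only [SX, Sx', Sx'', mkRow_eval, sgn]
        simp [uB, tauc, etac, single_eval]
        have hring : ((Cg:ℤ)) * (((n+1 : ℕ)) : ℤ) = (Cg:ℤ) * (n:ℤ) + (Cg:ℤ) := by
          push_cast; ring
        omega
    rw [hp2]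
    have hm : (∏ m : Fin 6, mbinom
          ((∑ j, SX R1 R2 Cf Cg (.inr (.inr (.inr (.inr m)))) j * uB n v2 j)
            + Sx' R1 R2 Cf Cg (.inr (.inr (.inr (.inr m)))) * (n:ℤ)
            + Sx'' R1 R2 Cf Cg (.inr (.inr (.inr (.inr m)))))
          ((∑ j, SY R1 R2 Cf Cg (.inr (.inr (.inr (.inr m)))) j * uB n v2 j)
            + Sy' R1 R2 Cf Cg (.inr (.inr (.inr (.inr m)))) * (n:ℤ)
            + Sy'' R1 R2 Cf Cg (.inr (.inr (.inr (.inr m)))))) = 1 := by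
      apply Finset.prod_eq_one
      intro m _
      fin_cases m
      · apply mbinom_one_diag rfl
        simp only [SX, Sx', Sx'', mkRow_eval]
        simp [uB, tauc, etac]
        try omega
      · apply mbinom_one_diag rfl
        simp only [SX, Sx', Sx'', mkRow_eval]
        simp [uB, tauc, etac]
        try omega
      · apply mbinom_one_diag rfl
        simp only [SX, Sx', Sx'', mkRow_eval]
        simp [uB, tauc, etac]
        try omega
      · apply mbinom_one_diag rfl
        simp only [SX, Sx', Sx'', mkRow_eval]
        simp [uB, tauc, etac]
        try omega
      · apply mbinom_one_diag
        · simp only [SX, SY, Sx', Sx'', Sy', Sy'', mkRow_eval]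
          simp [uB, tauc, etac]
          try ring
        · simp only [SX, Sx', Sx'', mkRow_eval]
          simp [uB, tauc, etac]
          try omega
      · apply mbinom_one_special
        · simp only [SX, Sx', Sx'', mkRow_eval]
          simp [uB, tauc, etac]
          try ring
        · simp only [SY, Sy', Sy'', mkRow_eval]
          simp [uB, tauc, etac]
          try ring
    rw [hm]
    ring
  · push_neg at hbox
    obtain ⟨k0, hk0⟩ := hbox
    have hrhs : term R2 n v2 = 0 := by
      by_contra hne
      exact absurd (hb v2 hne k0) (by omega)
    rw [hrhs]
    unfold ATerm GTerm
    apply Finset.prod_eq_zero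
      (Finset.mem_univ ((.inr (.inr (.inr (.inl (k0, decide (0 ≤ v2 k0)))))) : AI r1 r2 d1 d2))
    apply mbinom_zero_diag rfl
    rcases hsgn : decide (0 ≤ v2 k0) <;>
    · simp only [SX, Sx', Sx'', mkRow_eval, sgn, hsgn]
      simp [uB, tauc, etac, single_eval]
      simp at hsgn
      have hring : ((Cg:ℤ)) * (((n+1 : ℕ)) : ℤ) = (Cg:ℤ) * (n:ℤ) + (Cg:ℤ) := by
        push_cast; ring
      omega

end AddConstr3

section AddConstr4

variable {r1 d1 r2 d2 : ℕ} (R1 : RepData r1 d1) (R2 : RepData r2 d2) (Cf Cg : ℕ)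

lemma ATerm_modes (n : ℕ) (w : AK d1 d2 → ℤ) (h : ATerm R1 R2 Cf Cg n w ≠ 0) :
    (∃ v1 : Fin d1 → ℤ, w = uA n v1 ∧ ∀ j, (v1 j).natAbs ≤ Cf * (n + 1))
    ∨ (∃ v2 : Fin d2 → ℤ, w = uB n v2 ∧ ∀ k, (v2 k).natAbs ≤ Cg * (n + 1)) := by
  have hfac : ∀ i : AI r1 r2 d1 d2,
      mbinom ((∑ j, SX R1 R2 Cf Cg i j * w j) + Sx' R1 R2 Cf Cg i * (n:ℤ) + Sx'' R1 R2 Cf Cg i)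
        ((∑ j, SY R1 R2 Cf Cg i j * w j) + Sy' R1 R2 Cf Cg i * (n:ℤ) + Sy'' R1 R2 Cf Cg i)
        ≠ 0 := by
    intro i hzero
    exact h (Finset.prod_eq_zero (Finset.mem_univ i) hzero)
  have hf0 := hfac (.inr (.inr (.inr (.inr 0))))
  have hf1 := hfac (.inr (.inr (.inr (.inr 1))))
  have hf2 := hfac (.inr (.inr (.inr (.inr 2))))
  have hf3 := hfac (.inr (.inr (.inr (.inr 3))))
  have hf4 := hfac (.inr (.inr (.inr (.inr 4))))
  have hf5 := hfac (.inr (.inr (.inr (.inr 5))))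
  simp only [SX, SY, Sx', Sx'', Sy', Sy'', mkRow_eval, tauc, etac,
    mbinom_ne_zero_iff] at hf0 hf1 hf2 hf3 hf4 hf5
  simp at hf0 hf1 hf2 hf3 hf4 hf5
  have hmode : (w (Sum.inr (Sum.inr (Sum.inl ()))) = -1
        ∧ w (Sum.inr (Sum.inr (Sum.inr ()))) = -((n:ℤ) + 1))
      ∨ (w (Sum.inr (Sum.inr (Sum.inl ()))) = 0
        ∧ w (Sum.inr (Sum.inr (Sum.inr ()))) = 0) := by
    omega
  rcases hmode with ⟨hT, hE⟩ | ⟨hT, hE⟩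
  · -- mode A
    left
    have hpinned : ∀ k : Fin d2, w (Sum.inr (Sum.inl k)) = 0 := by
      intro k
      have hfT := hfac (.inr (.inr (.inr (.inl (k, true)))))
      have hfF := hfac (.inr (.inr (.inr (.inl (k, false)))))
      simp only [SX, SY, Sx', Sx'', Sy', Sy'', mkRow_eval, tauc, etac, sgn,
        mbinom_ne_zero_iff, single_eval] at hfT hfF
      simp [hE] at hfT hfF
      have hring : ((Cg:ℤ)) * (-1 + -(n:ℤ)) + (Cg:ℤ) * (n:ℤ) + (Cg:ℤ) = 0 := by ring
      omega
    have hbox : ∀ j : Fin d1, ((w (Sum.inl j)).natAbs ≤ Cf * (n + 1)) := by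
      intro j
      have hfT := hfac (.inr (.inr (.inl (j, true))))
      have hfF := hfac (.inr (.inr (.inl (j, false))))
      simp only [SX, SY, Sx', Sx'', Sy', Sy'', mkRow_eval, tauc, etac, sgn,
        mbinom_ne_zero_iff, single_eval] at hfT hfF
      simp [hE] at hfT hfF
      have hring : ((Cf:ℤ)) * (-1 + -(n:ℤ)) = -((Cf:ℤ) * (((n+1:ℕ)) : ℤ)) := by
        push_cast; ring
      omega
    refine ⟨fun j => w (Sum.inl j), ?_, hbox⟩
    funext x
    rcases x with j | x
    · rfl
    rcases x with k | x
    · exact (hpinned k).symm ▸ rfl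
    rcases x with u | u
    · cases u; exact hT.symm ▸ rfl
    · cases u; exact hE.symm ▸ rfl
  · -- mode B
    right
    have hpinned : ∀ j : Fin d1, w (Sum.inl j) = 0 := by
      intro j
      have hfT := hfac (.inr (.inr (.inl (j, true))))
      have hfF := hfac (.inr (.inr (.inl (j, false))))
      simp only [SX, SY, Sx', Sx'', Sy', Sy'', mkRow_eval, tauc, etac, sgn,
        mbinom_ne_zero_iff, single_eval] at hfT hfF
      simp [hE] at hfT hfF
      omega
    have hbox : ∀ k : Fin d2, ((w (Sum.inr (Sum.inl k))).natAbs ≤ Cg * (n + 1)) := by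
      intro k
      have hfT := hfac (.inr (.inr (.inr (.inl (k, true)))))
      have hfF := hfac (.inr (.inr (.inr (.inl (k, false)))))
      simp only [SX, SY, Sx', Sx'', Sy', Sy'', mkRow_eval, tauc, etac, sgn,
        mbinom_ne_zero_iff, single_eval] at hfT hfF
      simp [hE] at hfT hfF
      have hring : ((Cg:ℤ)) * (n:ℤ) + (Cg:ℤ) = (Cg:ℤ) * (((n+1:ℕ)) : ℤ) := by
        push_cast; ring
      omega
    refine ⟨fun k => w (Sum.inr (Sum.inl k)), ?_, hbox⟩
    funext x
    rcases x with j | x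
    · exact (hpinned j).symm ▸ rfl
    rcases x with k | x
    · rfl
    rcases x with u | u
    · cases u; exact hT.symm ▸ rfl
    · cases u; exact hE.symm ▸ rfl

end AddConstr4

section AddConstr5

variable {r1 d1 r2 d2 : ℕ} (R1 : RepData r1 d1) (R2 : RepData r2 d2) (Cf Cg : ℕ)

lemma box_finite (m c : ℕ) : {v : Fin m → ℤ | ∀ j, (v j).natAbs ≤ c}.Finite := by
  apply Set.Finite.subset (Set.Finite.pi (fun j : Fin m => Set.finite_Icc (-(c:ℤ)) c))
  intro v hv
  simp only [Set.mem_pi, Set.mem_univ, true_implies, Set.mem_Icc]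
  intro j
  have := hv j
  omega

lemma uA_injective (n : ℕ) : Function.Injective (uA (d1 := d1) (d2 := d2) n) := by
  intro a b h
  funext j
  exact congrFun h (Sum.inl j)

lemma uB_injective (n : ℕ) : Function.Injective (uB (d1 := d1) (d2 := d2) n) := by
  intro a b h
  funext k
  exact congrFun h (Sum.inr (Sum.inl k))

lemma ATerm_support_finite (n : ℕ) :
    (Function.support (ATerm R1 R2 Cf Cg n)).Finite := by
  apply Set.Finite.subset (Set.Finite.union
    ((box_finite d1 (Cf * (n+1))).image (uA n))
    ((box_finite d2 (Cg * (n+1))).image (uB n)))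
  intro w hw
  rcases ATerm_modes R1 R2 Cf Cg n w hw with ⟨v1, rfl, hb⟩ | ⟨v2, rfl, hb⟩
  · exact Or.inl ⟨v1, hb, rfl⟩
  · exact Or.inr ⟨v2, hb, rfl⟩

lemma ATerm_sum (n : ℕ)
    (hbf : ∀ v, term R1 n v ≠ 0 → ∀ j, (v j).natAbs ≤ Cf * (n + 1))
    (hbg : ∀ v, term R2 n v ≠ 0 → ∀ k, (v k).natAbs ≤ Cg * (n + 1)) :
    ∑ᶠ w, ATerm R1 R2 Cf Cg n w
      = (∑ᶠ v1, term R1 n v1) + (∑ᶠ v2, term R2 n v2) := by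
  have hsub : ∀ x ∈ Function.support (ATerm R1 R2 Cf Cg n),
      x ∈ (Set.univ : Set (AK d1 d2 → ℤ))
        ↔ x ∈ (Set.range (uA n) ∪ Set.range (uB n)) := by
    intro x hx
    simp only [Set.mem_univ, true_iff]
    rcases ATerm_modes R1 R2 Cf Cg n x hx with ⟨v1, rfl, _⟩ | ⟨v2, rfl, _⟩
    · exact Or.inl ⟨v1, rfl⟩
    · exact Or.inr ⟨v2, rfl⟩
  have hdisj : Disjoint (Set.range (uA (d1 := d1) (d2 := d2) n))
      (Set.range (uB (d1 := d1) (d2 := d2) n)) := by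
    rw [Set.disjoint_left]
    rintro x ⟨v1, rfl⟩ ⟨v2, hx⟩
    have := congrFun hx (Sum.inr (Sum.inr (Sum.inl ())))
    simp [uA, uB] at this
  have h1fin : (Set.range (uA (d1 := d1) (d2 := d2) n)
      ∩ Function.support (ATerm R1 R2 Cf Cg n)).Finite :=
    Set.Finite.subset (ATerm_support_finite R1 R2 Cf Cg n) Set.inter_subset_right
  have h2fin : (Set.range (uB (d1 := d1) (d2 := d2) n)
      ∩ Function.support (ATerm R1 R2 Cf Cg n)).Finite :=
    Set.Finite.subset (ATerm_support_finite R1 R2 Cf Cg n) Set.inter_subset_right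
  rw [← finsum_mem_univ, finsum_mem_inter_support_eq' _ _ _ hsub,
    finsum_mem_union' hdisj h1fin h2fin,
    finsum_mem_range (uA_injective n), finsum_mem_range (uB_injective n)]
  congr 1
  · exact finsum_congr (fun v1 => ATerm_uA R1 R2 Cf Cg n v1 hbf)
  · exact finsum_congr (fun v2 => ATerm_uB R1 R2 Cf Cg n v2 hbg)

end AddConstr5

lemma isBinomialMultisum_add {f g : ℕ → ℕ}
    (hf : IsBinomialMultisum f) (hg : IsBinomialMultisum g) :
    IsBinomialMultisum (fun n => f n + g n) := by
  classical
  obtain ⟨r1, d1, A1, B1, a1', a1'', b1', b1'', hfin1, hsum1⟩ := hf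
  obtain ⟨r2, d2, A2, B2, a2', a2'', b2', b2'', hfin2, hsum2⟩ := hg
  obtain ⟨Cf, hCf⟩ := support_bound A1 B1 a1' a1'' b1' b1'' hfin1
  obtain ⟨Cg, hCg⟩ := support_bound A2 B2 a2' a2'' b2' b2'' hfin2
  set R1 : RepData r1 d1 := ⟨A1, B1, a1', a1'', b1', b1''⟩ with hR1
  set R2 : RepData r2 d2 := ⟨A2, B2, a2', a2'', b2', b2''⟩ with hR2
  apply isBinomialMultisum_of_GTerm (SX R1 R2 Cf Cg) (SY R1 R2 Cf Cg)
    (Sx' R1 R2 Cf Cg) (Sx'' R1 R2 Cf Cg) (Sy' R1 R2 Cf Cg) (Sy'' R1 R2 Cf Cg)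
  · intro n
    exact ATerm_support_finite R1 R2 Cf Cg n
  · intro n
    have hsum := ATerm_sum R1 R2 Cf Cg n (fun v hv j => hCf n v hv j)
      (fun v hv k => hCg n v hv k)
    calc f n + g n = (∑ᶠ v1, term R1 n v1) + (∑ᶠ v2, term R2 n v2) := by
          rw [hsum1 n, hsum2 n]; rfl
      _ = ∑ᶠ w, ATerm R1 R2 Cf Cg n w := hsum.symm
      _ = _ := rfl

end BMS

/-- Binomial multisums are closed under pointwise addition and multiplication. -/
theorem isBinomialMultisum_add_mul (f g : ℕ → ℕ)
    (hf : IsBinomialMultisum f) (hg : IsBinomialMultisum g) :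
    IsBinomialMultisum (fun n => f n + g n) ∧
    IsBinomialMultisum (fun n => f n * g n) :=
  ⟨BMS.isBinomialMultisum_add hf hg, BMS.isBinomialMultisum_mul hf hg⟩
end

section
/- For every prime p, the function f : ℕ → ℕ defined by f(n) = binomial(2n, n) + (p^{2n} - 1)·binomial(2n, n+1) is a binomial multisum and satisfies ord_p(f(n)) = ord_p(C_n) for all n ∈ ℕ, where C_n is the n-th Catalan number and ord_p(m) = max{d : p^d divides m} is the p-adic valuation. -/
open Finset

theorem mbinom_natCast (a b : ℕ) : mbinom a b = a.choose b := by
  rcases le_or_gt b a with h | h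
  · simp [mbinom, h]
  · simp [mbinom, Nat.choose_eq_zero_of_lt h, show ¬ (b : ℤ) ≤ a by omega]

theorem mbinom_ne_zero_iff {a b : ℤ} :
    mbinom a b ≠ 0 ↔ 0 ≤ b ∧ b ≤ a ∨ a = -1 ∧ b = 0 := by
  unfold mbinom
  split_ifs with h₁ h₂
  · simp [Nat.choose_eq_zero_iff, h₁]
  · simp [h₂]
  · simp_all

theorem mbinom_self {a : ℤ} (ha : 0 ≤ a) : mbinom a a = 1 := by
  simp [mbinom, ha]

theorem mbinom_neg_one_zero : mbinom (-1) 0 = 1 := by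
  simp [mbinom]

theorem sum_Icc_zero_natCast {β : Type*} [AddCommMonoid β] (M : ℕ) (g : ℤ → β) :
    ∑ x ∈ Icc (0 : ℤ) M, g x = ∑ i ∈ range (M + 1), g i := by
  rw [Int.Icc_eq_finset_map, sum_map]
  simp

theorem sum_piFinset_const_succ {α β : Type*} [AddCommMonoid β] {k : ℕ} (s : Finset α)
    (F : (Fin (k + 1) → α) → β) :
    ∑ v ∈ Fintype.piFinset fun _ => s, F v =
      ∑ a ∈ s, ∑ w ∈ Fintype.piFinset fun _ => s, F (Fin.cons a w) := by
  rw [← sum_product']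
  refine sum_nbij' (fun v => (v 0, Fin.tail v)) (fun q => Fin.cons q.1 q.2) ?_ ?_ ?_ ?_ ?_ <;>
    simp [Fin.forall_fin_succ, Fin.tail]

theorem sum_range_choose_mul_pow {m M : ℕ} (hm : m ≤ M) (c : ℕ) :
    ∑ i ∈ range (M + 1), m.choose i * c ^ i = (c + 1) ^ m := by
  rw [← sum_subset (range_subset_range.2 (Nat.succ_le_succ hm)), add_pow]
  · simp [mul_comm]
  · intro i _ hi
    simp [Nat.choose_eq_zero_of_lt (by simpa using hi : m < i)]

def chainProd {k : ℕ} (m : ℤ) (u : Fin k → ℤ) : ℕ :=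
  ∏ j : Fin k, mbinom ((Fin.cons m u : Fin (k + 1) → ℤ) j.castSucc) (u j)

theorem chainProd_cons {k : ℕ} (m a : ℤ) (w : Fin k → ℤ) :
    chainProd m (Fin.cons a w) = mbinom m a * chainProd a w := by
  simp [chainProd, Fin.prod_univ_succ]

theorem mem_Icc_of_chainProd_ne_zero {k : ℕ} {m : ℤ} (hm : 0 ≤ m) {u : Fin k → ℤ}
    (hu : chainProd m u ≠ 0) (j : Fin k) : u j ∈ Icc 0 m := by
  induction k generalizing m with
  | zero => exact j.elim0
  | succ k ih =>
    induction u using Fin.consCases with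
    | cons a w =>
    rw [chainProd_cons, mul_ne_zero_iff] at hu
    have ha : 0 ≤ a ∧ a ≤ m := by rcases mbinom_ne_zero_iff.1 hu.1 with h | h <;> omega
    induction j using Fin.cases with
    | zero => simpa using ha
    | succ i => simpa using (mem_Icc.1 (ih ha.1 hu.2 i)).imp id (·.trans ha.2)

theorem sum_chainProd (k : ℕ) {m M : ℕ} (hm : m ≤ M) :
    ∑ u ∈ Fintype.piFinset fun _ : Fin k => Icc (0 : ℤ) M, chainProd m u = (k + 1) ^ m := by
  induction k generalizing m with
  | zero => simp [chainProd]
  | succ k ih =>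
    simp_rw [sum_piFinset_const_succ, chainProd_cons, ← mul_sum, sum_Icc_zero_natCast,
      mbinom_natCast]
    rw [sum_congr rfl fun i hi => by rw [ih (Nat.lt_succ_iff.1 (mem_range.1 hi))],
      sum_range_choose_mul_pow hm]

theorem sum_mbinom_selector {N : ℕ} {x : ℤ} (hx₀ : 0 ≤ x) (hxN : x ≤ N) (g : ℤ → ℕ) :
    ∑ y ∈ Icc (0 : ℤ) N, mbinom (x - 1) y * mbinom (y - x + 1) (y - x + 1) * g (x - y) =
      if x = 0 then g 0 else g 1 := by
  have hsel (y : ℤ) (hy : mbinom (x - 1) y * mbinom (y - x + 1) (y - x + 1) ≠ 0) :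
      y = max (x - 1) 0 := by
    rw [mul_ne_zero_iff, mbinom_ne_zero_iff, mbinom_ne_zero_iff] at hy
    omega
  rw [sum_eq_single_of_mem (max (x - 1) 0) (by simp; omega)]
  · split_ifs with hx
    · simp [hx, mbinom_neg_one_zero, mbinom_self]
    · rw [max_eq_left (by omega), mbinom_self (by omega), show x - 1 - x + 1 = 0 by ring,
        mbinom_self le_rfl, sub_sub_cancel, one_mul, one_mul]
  · intro y _ hy
    by_contra h
    exact hy (hsel y (left_ne_zero_of_mul h))

-- `v 0` is the variable `y` of the header, `v 1, …, v (s + 1)` is the chain `x_1, …, x_(s+1)`.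
def catalanSummand (s n : ℕ) (v : Fin (s + 2) → ℤ) : ℕ :=
  mbinom (v 1 - 1) (v 0) * mbinom (v 0 - v 1 + 1) (v 0 - v 1 + 1) *
    mbinom (2 * n : ℕ) (n + (v 1 - v 0)) * chainProd (2 * n : ℕ) (Fin.tail v)

theorem catalanSummand_cons (s n : ℕ) (y x : ℤ) (w : Fin s → ℤ) :
    catalanSummand s n (Fin.cons y (Fin.cons x w)) =
      mbinom (x - 1) y * mbinom (y - x + 1) (y - x + 1) * mbinom (2 * n : ℕ) (n + (x - y)) *
        (mbinom (2 * n : ℕ) x * chainProd x w) := by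
  simp [catalanSummand, chainProd_cons]

theorem support_catalanSummand_subset (s n : ℕ) :
    Function.support (catalanSummand s n) ⊆
      ↑(Fintype.piFinset fun _ : Fin (s + 2) => Icc (0 : ℤ) (2 * n : ℕ)) := by
  intro v hv
  induction v using Fin.consCases with
  | cons y u =>
  have hu : chainProd (2 * n : ℕ) u ≠ 0 := right_ne_zero_of_mul hv
  have hu_mem (j) := mem_Icc.1 (mem_Icc_of_chainProd_ne_zero (Nat.cast_nonneg _) hu j)
  have hy := mbinom_ne_zero_iff.1
    (left_ne_zero_of_mul (left_ne_zero_of_mul (left_ne_zero_of_mul hv)))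
  simp only [Fin.cons_zero, Fin.cons_one] at hy
  rw [mem_coe, Fintype.mem_piFinset, Fin.forall_fin_succ]
  simp only [Fin.cons_zero, Fin.cons_succ, mem_Icc]
  exact ⟨by have := hu_mem 0; omega, hu_mem⟩

theorem sum_range_ite_zero_mul_choose_mul_pow (M a b c : ℕ) :
    ∑ i ∈ range (M + 1), (if i = 0 then a else b) * (M.choose i * c ^ i) =
      a + ((c + 1) ^ M - 1) * b := by
  have hpow := sum_range_choose_mul_pow le_rfl c (M := M)
  rw [sum_range_succ'] at hpow ⊢
  simp only [Nat.add_one_ne_zero, if_false, ← mul_sum, if_true, Nat.choose_zero_right, pow_zero,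
    mul_one] at hpow ⊢
  rw [← hpow, Nat.add_sub_cancel]
  ring

theorem sum_catalanSummand (s n : ℕ) :
    ∑ v ∈ Fintype.piFinset (fun _ : Fin (s + 2) => Icc (0 : ℤ) (2 * n : ℕ)),
        catalanSummand s n v =
      (2 * n).choose n + ((s + 2) ^ (2 * n) - 1) * (2 * n).choose (n + 1) := by
  simp_rw [sum_piFinset_const_succ, catalanSummand_cons]
  rw [sum_comm, sum_Icc_zero_natCast, ← sum_range_ite_zero_mul_choose_mul_pow]
  refine sum_congr rfl fun i hi => ?_
  have hi : i ≤ 2 * n := Nat.lt_succ_iff.1 (mem_range.1 hi)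
  simp_rw [← mul_sum, ← sum_mul, sum_chainProd s hi]
  rw [sum_mbinom_selector (Nat.cast_nonneg i) (by exact_mod_cast hi)
    (fun z => mbinom (2 * n : ℕ) (n + z)), mbinom_natCast]
  simp only [Nat.cast_eq_zero]
  split_ifs
  · rw [add_zero, mbinom_natCast]
  · rw [← Nat.cast_add_one, mbinom_natCast]

def IsAffineForm {d : ℕ} (g : ℕ → (Fin d → ℤ) → ℤ) : Prop :=
  ∃ (c : Fin d → ℤ) (c' c'' : ℤ), ∀ n v, g n v = c ⬝ᵥ v + c' * n + c''

namespace IsAffineForm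

variable {d : ℕ} {g h : ℕ → (Fin d → ℤ) → ℤ}

theorem const (c : ℤ) : IsAffineForm fun (_ : ℕ) (_ : Fin d → ℤ) => c :=
  ⟨0, 0, c, by simp⟩

theorem natCast : IsAffineForm fun (n : ℕ) (_ : Fin d → ℤ) => (n : ℤ) :=
  ⟨0, 1, 0, by simp⟩

theorem apply (k : Fin d) : IsAffineForm fun (_ : ℕ) (v : Fin d → ℤ) => v k :=
  ⟨Pi.single k 1, 0, 0, by simp⟩

theorem add (hg : IsAffineForm g) (hh : IsAffineForm h) :
    IsAffineForm fun n v => g n v + h n v := by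
  obtain ⟨c, c', c'', hg⟩ := hg
  obtain ⟨e, e', e'', hh⟩ := hh
  exact ⟨c + e, c' + e', c'' + e'', fun n v => by simp only [hg, hh, add_dotProduct]; ring⟩

theorem sub (hg : IsAffineForm g) (hh : IsAffineForm h) :
    IsAffineForm fun n v => g n v - h n v := by
  obtain ⟨c, c', c'', hg⟩ := hg
  obtain ⟨e, e', e'', hh⟩ := hh
  exact ⟨c - e, c' - e', c'' - e'', fun n v => by simp only [hg, hh, sub_dotProduct]; ring⟩

theorem const_mul (a : ℤ) (hg : IsAffineForm g) : IsAffineForm fun n v => a * g n v := by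
  obtain ⟨c, c', c'', hg⟩ := hg
  exact ⟨a • c, a * c', a * c'', fun n v => by
    simp only [hg, smul_dotProduct, smul_eq_mul]; ring⟩

end IsAffineForm

theorem isBinomialMultisum_of_isAffineForm {f : ℕ → ℕ} {r d : ℕ}
    (top bot : Fin r → ℕ → (Fin d → ℤ) → ℤ)
    (htop : ∀ i, IsAffineForm (top i)) (hbot : ∀ i, IsAffineForm (bot i))
    (hfin : ∀ n, (Function.support fun v => ∏ i, mbinom (top i n v) (bot i n v)).Finite)
    (hf : ∀ n, f n = ∑ᶠ v, ∏ i, mbinom (top i n v) (bot i n v)) :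
    IsBinomialMultisum f := by
  choose A a' a'' hA using htop
  choose B b' b'' hB using hbot
  have hterm (n : ℕ) :
      multisumTerm A B a' a'' b' b'' n = fun v => ∏ i, mbinom (top i n v) (bot i n v) :=
    funext fun v => by simp only [multisumTerm, hA, hB, dotProduct]
  exact ⟨r, d, A, B, a', a'', b', b'', fun n => hterm n ▸ hfin n, fun n => hterm n ▸ hf n⟩

def catalanTop (s : ℕ) : Fin (s + 4) → ℕ → (Fin (s + 2) → ℤ) → ℤ :=
  Matrix.vecCons (fun _ v => v 1 - 1) <| Matrix.vecCons (fun _ v => v 0 - v 1 + 1) <|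
    Matrix.vecCons (fun n _ => (2 * n : ℕ)) fun j n v =>
      (Fin.cons ((2 * n : ℕ) : ℤ) (Fin.tail v) : Fin (s + 2) → ℤ) j.castSucc

def catalanBot (s : ℕ) : Fin (s + 4) → ℕ → (Fin (s + 2) → ℤ) → ℤ :=
  Matrix.vecCons (fun _ v => v 0) <| Matrix.vecCons (fun _ v => v 0 - v 1 + 1) <|
    Matrix.vecCons (fun n v => n + (v 1 - v 0)) fun j _ v => Fin.tail v j

theorem prod_mbinom_catalanTop_catalanBot (s n : ℕ) (v : Fin (s + 2) → ℤ) :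
    ∏ i, mbinom (catalanTop s i n v) (catalanBot s i n v) = catalanSummand s n v := by
  simp [catalanTop, catalanBot, catalanSummand, Fin.prod_univ_succ, chainProd, mul_assoc]

theorem isAffineForm_catalanTop (s : ℕ) (i : Fin (s + 4)) : IsAffineForm (catalanTop s i) := by
  refine Fin.cases ?_ (Fin.cases ?_ (Fin.cases ?_ fun j => ?_)) i <;>
    simp only [catalanTop, Matrix.cons_val_zero, Matrix.cons_val_succ]
  · exact (IsAffineForm.apply 1).sub (.const 1)
  · exact ((IsAffineForm.apply 0).sub (.apply 1)).add (.const 1)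
  · simpa using IsAffineForm.natCast.const_mul 2
  · induction j using Fin.cases with
    | zero => simpa using IsAffineForm.natCast.const_mul 2
    | succ j =>
      simp only [← Fin.succ_castSucc, Fin.cons_succ]
      exact .apply j.castSucc.succ

theorem isAffineForm_catalanBot (s : ℕ) (i : Fin (s + 4)) : IsAffineForm (catalanBot s i) := by
  refine Fin.cases ?_ (Fin.cases ?_ (Fin.cases ?_ fun j => ?_)) i <;>
    simp only [catalanBot, Matrix.cons_val_zero, Matrix.cons_val_succ]
  · exact .apply 0
  · exact ((IsAffineForm.apply 0).sub (.apply 1)).add (.const 1)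
  · exact IsAffineForm.natCast.add ((IsAffineForm.apply 1).sub (.apply 0))
  · exact .apply j.succ

theorem isBinomialMultisum_choose_add_pow_sub_one_mul_choose (s : ℕ) :
    IsBinomialMultisum fun n =>
      (2 * n).choose n + ((s + 2) ^ (2 * n) - 1) * (2 * n).choose (n + 1) := by
  have hsupp := support_catalanSummand_subset s
  refine isBinomialMultisum_of_isAffineForm (catalanTop s) (catalanBot s)
    (isAffineForm_catalanTop s) (isAffineForm_catalanBot s) ?_ ?_ <;>
    simp_rw [prod_mbinom_catalanTop_catalanBot]
  · exact fun n => (finite_toSet _).subset (hsupp n)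
  · intro n
    rw [finsum_eq_sum_of_support_subset _ (hsupp n), sum_catalanSummand]

theorem padicValNat_add_pow_mul {p a k : ℕ} [hp : Fact p.Prime] (b : ℕ) (ha : a ≠ 0)
    (hak : a < p ^ k) : padicValNat p (a + p ^ k * b) = padicValNat p a := by
  have hk : padicValNat p a < k :=
    (padicValNat_le_nat_log a).trans_lt ((Nat.log_lt_iff_lt_pow hp.out.one_lt ha).2 hak)
  have hdvd : ∀ m ≤ k, p ^ m ∣ a + p ^ k * b ↔ p ^ m ∣ a := fun m hm =>
    (Nat.dvd_add_left ((pow_dvd_pow p hm).mul_right b))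
  have hN : a + p ^ k * b ≠ 0 := by omega
  refine le_antisymm ?_ ((padicValNat_dvd_iff_le hN).1 ((hdvd _ hk.le).2 pow_padicValNat_dvd))
  by_contra! h
  exact pow_succ_padicValNat_not_dvd ha ((hdvd _ hk).1 ((padicValNat_dvd_iff_le hN).2 h))

theorem catalan_add_choose_succ (n : ℕ) :
    catalan n + (2 * n).choose (n + 1) = (2 * n).choose n := by
  refine Nat.eq_of_mul_eq_mul_left (by omega : 0 < n + 1) ?_
  have h := Nat.choose_succ_right_eq (2 * n) n
  rw [show 2 * n - n = n by omega] at h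
  rw [mul_add, succ_mul_catalan_eq_centralBinom, Nat.centralBinom_eq_two_mul_choose,
    mul_comm _ (Nat.choose _ (n + 1)), h]
  ring

theorem catalan_lt_pow {n p : ℕ} (hn : n ≠ 0) (hp : 2 ≤ p) : catalan n < p ^ (2 * n) :=
  calc catalan n ≤ (n + 1) * catalan n := Nat.le_mul_of_pos_left _ n.succ_pos
    _ = n.centralBinom := succ_mul_catalan_eq_centralBinom n
    _ < 4 ^ n := Nat.centralBinom_lt_four_pow hn
    _ = 2 ^ (2 * n) := by rw [pow_mul]; norm_num
    _ ≤ p ^ (2 * n) := Nat.pow_le_pow_left hp _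

theorem padicValNat_choose_add_pow_sub_one_mul_choose {p : ℕ} (hp : p.Prime) (n : ℕ) :
    padicValNat p ((2 * n).choose n + (p ^ (2 * n) - 1) * (2 * n).choose (n + 1)) =
      padicValNat p (catalan n) := by
  have : Fact p.Prime := ⟨hp⟩
  rcases eq_or_ne n 0 with rfl | hn
  · simp
  have hpow : 1 ≤ p ^ (2 * n) := Nat.one_le_pow _ _ hp.pos
  have hsplit : (2 * n).choose n + (p ^ (2 * n) - 1) * (2 * n).choose (n + 1) =
      catalan n + p ^ (2 * n) * (2 * n).choose (n + 1) := by
    rw [← catalan_add_choose_succ, Nat.sub_one_mul,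
      ← Nat.add_sub_assoc (Nat.le_mul_of_pos_left _ hpow)]
    omega
  have hcat : catalan n ≠ 0 := fun h =>
    Nat.centralBinom_ne_zero n (by rw [← succ_mul_catalan_eq_centralBinom, h, mul_zero])
  rw [hsplit, padicValNat_add_pow_mul _ hcat (catalan_lt_pow hn hp.two_le)]

/-- For every prime `p`, the function `f(n) = C(2n,n) + (p^{2n}-1)·C(2n,n+1)` is a
binomial multisum (= tile counting function) whose `p`-adic valuation agrees with that
of the Catalan numbers. -/
theorem tileCounting_catalan_padic (p : ℕ) (hp : p.Prime) :
    IsBinomialMultisum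
      (fun n => Nat.choose (2 * n) n + (p ^ (2 * n) - 1) * Nat.choose (2 * n) (n + 1)) ∧
    ∀ n : ℕ,
      padicValNat p
        (Nat.choose (2 * n) n + (p ^ (2 * n) - 1) * Nat.choose (2 * n) (n + 1)) =
      padicValNat p (catalan n) := by
  refine ⟨?_, padicValNat_choose_add_pow_sub_one_mul_choose hp⟩
  obtain ⟨s, rfl⟩ : ∃ s, p = s + 2 := ⟨p - 2, by have := hp.two_le; omega⟩
  exact isBinomialMultisum_choose_add_pow_sub_one_mul_choose s
end

section
/- Let G be a finite directed multigraph with vertex set {v₀, v₁, …, v_N} (a finite type E of edges with source and target maps src, tgt : E → {0,1,…,N}). Then the set of irreducible cycles of G is finite. -/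
/-!
The vertices visited by an irreducible cycle never contain a factor `x, y₁, …, yₖ, x` with all
`yᵢ ≥ x`: the edges leaving the first `x` and ending at the second one would form a shorter
positive cycle. In such a word the least letter occurs only once, and removing it splits the word
into two words over a smaller alphabet, so a word over `n` letters has length less than `2 ^ n`.
Hence irreducible cycles have length less than `2 ^ (N + 1)`, and there are finitely many of them.
-/

/-- A nonempty list of edges is a cycle: consecutive edges are composable and the target
of the last edge is the source of the first. -/
def IsCycleList {V E : Type*} (src tgt : E → V) (l : List E) : Prop :=
  l ≠ [] ∧ l.Chain' (fun e e' => tgt e = src e') ∧ l.head?.map src = l.getLast?.map tgt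

/-- A cycle is positive if it starts (and ends) at some vertex `v_i` and only passes
through vertices `v_j` with `j ≥ i`. -/
def IsPositiveCycle {N : ℕ} {E : Type*} (src tgt : E → Fin (N + 1)) (l : List E) : Prop :=
  IsCycleList src tgt l ∧
    ∀ e₀ ∈ l.head?, ∀ e ∈ l, src e₀ ≤ src e ∧ src e₀ ≤ tgt e

/-- A cycle is irreducible if it is positive and no proper contiguous subsequence of its
edges forms a positive cycle. -/
def IsIrreducibleCycle {N : ℕ} {E : Type*} (src tgt : E → Fin (N + 1)) (l : List E) : Prop :=
  IsPositiveCycle src tgt l ∧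
    ¬ ∃ l₁ m l₂ : List E, l = l₁ ++ m ++ l₂ ∧ m.length < l.length ∧
      IsPositiveCycle src tgt m

open List

section PositiveReturn

variable {V : Type*} [LinearOrder V]

def HasPositiveReturn (w : List V) : Prop :=
  ∃ x m, x :: m ++ [x] <:+: w ∧ ∀ y ∈ m, x ≤ y

theorem HasPositiveReturn.mono {u w : List V} (hu : HasPositiveReturn u) (huw : u <:+: w) :
    HasPositiveReturn w :=
  let ⟨x, m, hx, hm⟩ := hu
  ⟨x, m, hx.trans huw, hm⟩

theorem exists_eq_append_cons_of_not_hasPositiveReturn {w : List V} {x : V}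
    (hw : ¬HasPositiveReturn w) (hx : x ∈ w) (hmin : ∀ y ∈ w, x ≤ y) :
    ∃ w₁ w₂, w = w₁ ++ x :: w₂ ∧ x ∉ w₁ ∧ x ∉ w₂ := by
  obtain ⟨s, t, rfl⟩ := append_of_mem hx
  refine ⟨s, t, rfl, fun hs => hw ?_, fun ht => hw ?_⟩
  · obtain ⟨a, b, rfl⟩ := append_of_mem hs
    exact ⟨x, b, ⟨a, t, by simp⟩, fun y hy => hmin y (by simp [hy])⟩
  · obtain ⟨a, b, rfl⟩ := append_of_mem ht
    exact ⟨x, a, ⟨s, b, by simp⟩, fun y hy => hmin y (by simp [hy])⟩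

theorem length_lt_two_pow_card_toFinset_of_not_hasPositiveReturn {w : List V}
    (hw : ¬HasPositiveReturn w) : w.length < 2 ^ w.toFinset.card := by
  suffices ∀ n (w : List V), w.toFinset.card ≤ n → ¬HasPositiveReturn w → w.length < 2 ^ n from
    this _ w le_rfl hw
  intro n
  induction n with
  | zero =>
    intro w hcard _
    simp_all
  | succ n ih =>
    intro w hcard hw
    obtain rfl | hne := eq_or_ne w []
    · simp
    obtain ⟨x, hx, hmin⟩ : ∃ x ∈ w, ∀ y ∈ w, x ≤ y :=
      ⟨_, min_mem hne, fun _ hy => min_le_of_mem hy⟩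
    obtain ⟨w₁, w₂, rfl, hx₁, hx₂⟩ := exists_eq_append_cons_of_not_hasPositiveReturn hw hx hmin
    have hcard_le {u : List V} (hxu : x ∉ u) (hu : u ⊆ w₁ ++ x :: w₂) : u.toFinset.card ≤ n := by
      have hsub : u.toFinset ⊆ (w₁ ++ x :: w₂).toFinset.erase x := fun y hy =>
        Finset.mem_erase.mpr ⟨fun hyx => hxu (hyx ▸ mem_toFinset.mp hy),
          mem_toFinset.mpr (hu (mem_toFinset.mp hy))⟩
      have := Finset.card_le_card hsub
      rw [Finset.card_erase_of_mem (by simp)] at this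
      omega
    have h₁ := ih w₁ (hcard_le hx₁ (by simp)) fun h => hw (h.mono ⟨[], x :: w₂, by simp⟩)
    have h₂ := ih w₂ (hcard_le hx₂ (by simp)) fun h => hw (h.mono ⟨w₁ ++ [x], [], by simp⟩)
    simp only [length_append, length_cons, pow_succ]
    omega

end PositiveReturn

theorem List.IsChain.map_dropLast_eq_map_tail {E V : Type*} {src tgt : E → V} :
    ∀ {l : List E}, l.IsChain (fun e e' => tgt e = src e') → l.dropLast.map tgt = l.tail.map src
  | [], _ | [_], _ => rfl
  | a :: b :: t, h => by
    rw [isChain_cons_cons] at h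
    simp [h.1, h.2.map_dropLast_eq_map_tail]

section IrreducibleCycle

variable {N : ℕ} {E : Type*} {src tgt : E → Fin (N + 1)}

theorem isPositiveCycle_of_isChain_append {c : List E} {e : E} {x : Fin (N + 1)}
    {m : List (Fin (N + 1))} (hchain : (c ++ [e]).IsChain (fun e e' => tgt e = src e'))
    (hc : c.map src = x :: m) (he : src e = x) (hm : ∀ y ∈ m, x ≤ y) :
    IsPositiveCycle src tgt c := by
  have hne : c ≠ [] := by rintro rfl; simp at hc
  have htgt : c.map tgt = m ++ [x] := by
    have := hchain.map_dropLast_eq_map_tail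
    rw [dropLast_concat, tail_append_of_ne_nil hne, map_append, map_tail, hc] at this
    simpa [he] using this
  refine ⟨⟨hne, hchain.left_of_append, ?_⟩, fun e₀ he₀ f hf => ?_⟩
  · rw [← head?_map, ← getLast?_map, hc, htgt]
    simp
  · have hsrc₀ : src e₀ = x := by
      simpa [← head?_map, hc, eq_comm] using congrArg (Option.map src) (Option.mem_def.mp he₀)
    have hsrc : src f ∈ x :: m := hc ▸ mem_map_of_mem hf
    have htgtf : tgt f ∈ m ++ [x] := htgt ▸ mem_map_of_mem hf
    rw [hsrc₀]
    constructor
    · rcases mem_cons.mp hsrc with h | h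
      exacts [h.ge, hm _ h]
    · rcases mem_append.mp htgtf with h | h
      exacts [hm _ h, (mem_singleton.mp h).ge]

theorem IsIrreducibleCycle.not_hasPositiveReturn {l : List E}
    (hl : IsIrreducibleCycle src tgt l) : ¬HasPositiveReturn (l.map src) := by
  rintro ⟨x, m, hinf, hm⟩
  obtain ⟨c', ⟨l₁, l₂, rfl⟩, hc'⟩ := infix_map_iff.mp hinf
  obtain ⟨c, es, rfl, hc, hes⟩ := map_eq_append_iff.mp hc'.symm
  obtain ⟨e, rfl, he⟩ := map_eq_singleton_iff.mp hes
  have hchain := hl.1.1.2.1.infix (infix_append l₁ (c ++ [e]) l₂)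
  refine hl.2 ⟨l₁, c, e :: l₂, by simp, by simp; omega, ?_⟩
  exact isPositiveCycle_of_isChain_append hchain hc he hm

end IrreducibleCycle

/-- In a finite directed multigraph with vertices `v₀, …, v_N`, there are only finitely
many irreducible cycles. -/
theorem finite_irreducibleCycles (N : ℕ) (E : Type*) [Fintype E]
    (src tgt : E → Fin (N + 1)) :
    {l : List E | IsIrreducibleCycle src tgt l}.Finite := by
  refine (finite_length_le E (2 ^ (N + 1))).subset fun l hl => ?_
  calc l.length = (l.map src).length := (length_map _).symm
    _ ≤ 2 ^ (l.map src).toFinset.card :=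
      (length_lt_two_pow_card_toFinset_of_not_hasPositiveReturn hl.not_hasPositiveReturn).le
    _ ≤ 2 ^ (N + 1) :=
      Nat.pow_le_pow_right two_pos (by simpa using (l.map src).toFinset.card_le_univ)
end

section
/- Let c ≥ 1 be a fixed integer and suppose f : ℕ → ℕ is a quasi-diagonal of an ℕ-rational generating function, i.e., f(n) = [x₁^{cn} ⋯ x_k^{cn}] F for some k ≥ 1 and F ∈ 𝓡_k. Then f is a diagonal of an ℕ-rational generating function: there exist ℓ ≥ 1 and G ∈ 𝓡_ℓ such that f(n) = [x₁^n ⋯ x_ℓ^n] G for all n ∈ ℕ. -/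
/-- The class `𝓡_k` of ℕ-rational generating functions in `k` variables: the smallest
class of power series in `ℕ[[x₁,…,x_k]]` containing `0` and the variables, closed under
addition and multiplication, and containing `1/(1-F)` (the unique solution `G` of
`G = 1 + F·G`) whenever it contains an `F` with zero constant term. -/
inductive NRational (k : ℕ) : MvPowerSeries (Fin k) ℕ → Prop
  | zero : NRational k 0
  | X : ∀ i : Fin k, NRational k (MvPowerSeries.X i)
  | add : ∀ {F G}, NRational k F → NRational k G → NRational k (F + G)
  | mul : ∀ {F G}, NRational k F → NRational k G → NRational k (F * G)
  | geom : ∀ {F G}, NRational k F → MvPowerSeries.constantCoeff F = 0 →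
      G = 1 + F * G → NRational k G

/-!
Write `F_ρ` for the multisection of `F` at a residue vector `ρ ∈ (ℤ/c)^k`, the series with
`[x^e] F_ρ = [x^(c e + ρ)] F`; the quasi-diagonal of `F` is the diagonal of `F_0`, so it suffices
that multisections of ℕ-rational series are ℕ-rational. Sums are immediate, and
`(F G)_ρ = ∑_s x^(carry ρ s) F_s G_(ρ - s)` handles products. If `G = 1 + F G` with
`F(0) = 0`, the family `(G_ρ)_ρ` solves a linear system whose coefficients are ℕ-rational by
induction, and a coefficient with nonzero constant term always lowers `∑ ρ_i`. Such a system is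
solved by Gaussian elimination, each pivot by Arden's rule: `X = B + A X` with `A(0) = 0` forces
`X = A^* B`.
-/

open Finset

namespace MvPowerSeries

variable {σ R : Type*} [CommSemiring R]

open scoped WithPiTopology in
theorem exists_eq_one_add_mul {A : MvPowerSeries σ R} (hA : constantCoeff A = 0) :
    ∃ Q : MvPowerSeries σ R, Q = 1 + A * Q := by
  -- `A^* = ∑ A ^ n`, summed coefficientwise with discrete coefficients.
  let _ : TopologicalSpace R := ⊥
  have : DiscreteTopology R := ⟨rfl⟩
  have hs := WithPiTopology.summable_pow_of_constantCoeff_eq_zero hA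
  refine ⟨∑' n, A ^ n, ?_⟩
  conv_lhs => rw [tsum_eq_zero_add' (by simpa only [pow_succ'] using hs.mul_left A)]
  simp only [pow_zero, pow_succ', hs.tsum_mul_left]

theorem eq_of_eq_add_mul {A B X Y : MvPowerSeries σ R} (hA : constantCoeff A = 0)
    (hX : X = B + A * X) (hY : Y = B + A * Y) : X = Y := by
  have expand : ∀ {Z}, Z = B + A * Z → ∀ N : ℕ,
      Z = (∑ n ∈ range N, A ^ n) * B + A ^ N * Z := by
    intro Z hZ N
    induction N with
    | zero => simp
    | succ N ih =>
      conv_lhs => rw [ih, hZ]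
      rw [sum_range_succ, pow_succ]
      ring
  ext e
  have tail (Z : MvPowerSeries σ R) : coeff e (A ^ (e.degree + 1) * Z) = 0 :=
    coeff_of_lt_order <| (Nat.cast_lt.2 e.degree.lt_succ_self).trans_le <|
      (le_order_pow_of_constantCoeff_eq_zero _ hA).trans <| le_self_add.trans le_order_mul
  rw [expand hX (e.degree + 1), expand hY (e.degree + 1), map_add, map_add, tail, tail]

theorem eq_mul_of_eq_add_mul {A B Q X : MvPowerSeries σ R} (hA : constantCoeff A = 0)
    (hQ : Q = 1 + A * Q) (hX : X = B + A * X) : X = Q * B :=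
  eq_of_eq_add_mul hA hX (by nth_rw 1 [hQ]; ring)

theorem mem_ite_antidiagonal_tsub [DecidableEq σ] {d e : σ →₀ ℕ} {uv : (σ →₀ ℕ) × (σ →₀ ℕ)} :
    uv ∈ (if d ≤ e then antidiagonal (e - d) else ∅) ↔ uv.1 + uv.2 + d = e := by
  split_ifs with h
  · rw [HasAntidiagonal.mem_antidiagonal, eq_tsub_iff_add_eq_of_le h]
  · simp only [notMem_empty, false_iff]
    exact fun h' ↦ h (h' ▸ le_add_self)

theorem coeff_monomial_one_mul_mul [DecidableEq σ] (d e : σ →₀ ℕ) (F G : MvPowerSeries σ R) :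
    coeff e (monomial d 1 * (F * G)) =
      ∑ uv ∈ if d ≤ e then antidiagonal (e - d) else ∅, coeff uv.1 F * coeff uv.2 G := by
  rw [coeff_monomial_mul]
  split_ifs <;> simp [coeff_mul]

section Multisection

variable [Fintype σ] {c : ℕ}

noncomputable def ofResidues (ρ : σ → Fin c) : σ →₀ ℕ :=
  Finsupp.equivFunOnFinite.symm fun i ↦ ρ i

-- Adding the residues `s i` and `ρ i - s i` overflows `c` exactly when `ρ i < s i`.
noncomputable def carry (ρ s : σ → Fin c) : σ →₀ ℕ :=
  Finsupp.equivFunOnFinite.symm fun i ↦ if ρ i < s i then 1 else 0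

@[simp] theorem ofResidues_apply (ρ : σ → Fin c) (i : σ) : ofResidues ρ i = ρ i := rfl

@[simp] theorem carry_apply (ρ s : σ → Fin c) (i : σ) :
    carry ρ s i = if ρ i < s i then 1 else 0 := rfl

variable (c) in
noncomputable def multisection (ρ : σ → Fin c) :
    MvPowerSeries σ R →ₗ[R] MvPowerSeries σ R where
  toFun F e := coeff (c • e + ofResidues ρ) F
  map_add' _ _ := rfl
  map_smul' _ _ := rfl

theorem coeff_multisection (ρ : σ → Fin c) (F : MvPowerSeries σ R) (e : σ →₀ ℕ) :
    coeff e (multisection c ρ F) = coeff (c • e + ofResidues ρ) F := rfl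

variable [NeZero c]

variable (c) in
def residues (x : σ →₀ ℕ) : σ → Fin c := fun i ↦ Fin.ofNat c (x i)

@[simp] theorem ofResidues_zero : ofResidues (0 : σ → Fin c) = 0 := by
  ext
  simp

theorem smul_floorDiv_add_ofResidues (x : σ →₀ ℕ) :
    c • (x ⌊/⌋ c) + ofResidues (residues c x) = x := by
  ext i
  simp [residues, Nat.div_add_mod]

theorem residues_smul_add_ofResidues (u : σ →₀ ℕ) (s : σ → Fin c) :
    residues c (c • u + ofResidues s) = s := by
  ext i
  simp [residues, Nat.mod_eq_of_lt (s i).isLt]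

theorem smul_add_ofResidues_floorDiv (u : σ →₀ ℕ) (s : σ → Fin c) :
    (c • u + ofResidues s) ⌊/⌋ c = u := by
  ext i
  simp [Nat.mul_add_div (NeZero.pos c), Nat.div_eq_of_lt (s i).isLt]

theorem residues_eq_sub_of_add_eq {x y e : σ →₀ ℕ} {ρ : σ → Fin c}
    (h : x + y = c • e + ofResidues ρ) : residues c y = ρ - residues c x := by
  ext1 i
  have hi : x i + y i = c * e i + ρ i := by simpa using DFunLike.congr_fun h i
  rw [Pi.sub_apply, eq_sub_iff_add_eq', Fin.ext_iff, residues, residues, Fin.val_add, Fin.val_ofNat,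
    Fin.val_ofNat, ← Nat.add_mod, hi, Nat.mul_add_mod, Nat.mod_eq_of_lt (ρ i).isLt]

theorem mul_add_add_mul_add_sub_iff (ρ s : Fin c) (u v a : ℕ) :
    c * u + s + (c * v + (ρ - s : Fin c)) = c * a + ρ ↔
      u + v + (if ρ < s then 1 else 0) = a := by
  have key :
      c * u + s + (c * v + (ρ - s : Fin c)) = c * (u + v + if ρ < s then 1 else 0) + ρ := by
    have := s.isLt
    split_ifs with h
    · rw [Fin.coe_sub_iff_lt.2 h]
      simp only [Nat.mul_add, Nat.mul_one]
      omega
    · rw [Fin.coe_sub_iff_le.2 (not_lt.1 h)]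
      simp only [Nat.mul_add, Nat.add_zero]
      omega
  rw [key, Nat.add_right_cancel_iff, Nat.mul_left_cancel_iff (NeZero.pos c)]

theorem smul_add_ofResidues_add_iff (ρ s : σ → Fin c) (u v e : σ →₀ ℕ) :
    c • u + ofResidues s + (c • v + ofResidues (ρ - s)) = c • e + ofResidues ρ ↔
      u + v + carry ρ s = e := by
  simp only [Finsupp.ext_iff, Finsupp.coe_add, Pi.add_apply, Finsupp.smul_apply, smul_eq_mul,
    ofResidues_apply, carry_apply, Pi.sub_apply, mul_add_add_mul_add_sub_iff]

theorem multisection_monomial (ρ : σ → Fin c) (n : σ →₀ ℕ) (a : R) :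
    multisection c ρ (monomial n a) =
      if residues c n = ρ then monomial (n ⌊/⌋ c) a else 0 := by
  classical
  ext e
  rw [coeff_multisection, coeff_monomial]
  split_ifs with he hρ hρ
  · rw [coeff_monomial, if_pos (by rw [← he, smul_add_ofResidues_floorDiv])]
  · exact absurd (he ▸ residues_smul_add_ofResidues e ρ) hρ
  · rw [coeff_monomial, if_neg fun h ↦ he (by rw [h, ← hρ, smul_floorDiv_add_ofResidues])]
  · rw [map_zero]

theorem multisection_mul [DecidableEq σ] (ρ : σ → Fin c) (F G : MvPowerSeries σ R) :
    multisection c ρ (F * G) = ∑ s : σ → Fin c,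
      monomial (carry ρ s) 1 * (multisection c s F * multisection c (ρ - s) G) := by
  ext e
  rw [coeff_multisection, coeff_mul, map_sum]
  simp only [coeff_monomial_one_mul_mul, coeff_multisection]
  rw [sum_sigma']
  -- Reindex by `(p, q) ↦ (p mod c, p div c, q div c)`; the residue of `q` is forced to be
  -- `ρ - p mod c`.
  have decompose {p : (σ →₀ ℕ) × (σ →₀ ℕ)}
      (hp : p ∈ antidiagonal (c • e + ofResidues ρ)) :
      (c • (p.1 ⌊/⌋ c) + ofResidues (residues c p.1),
        c • (p.2 ⌊/⌋ c) + ofResidues (ρ - residues c p.1)) = p := by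
    rw [← residues_eq_sub_of_add_eq (HasAntidiagonal.mem_antidiagonal.1 hp),
      smul_floorDiv_add_ofResidues, smul_floorDiv_add_ofResidues]
  refine sum_nbij' (fun p ↦ ⟨residues c p.1, (p.1 ⌊/⌋ c, p.2 ⌊/⌋ c)⟩)
    (fun x ↦ (c • x.2.1 + ofResidues x.1, c • x.2.2 + ofResidues (ρ - x.1)))
    (fun p hp ↦ ?_) (fun x hx ↦ ?_) (fun p hp ↦ decompose hp) (fun x _ ↦ ?_)
    (fun p hp ↦ ?_)
  · refine mem_sigma.2 ⟨mem_univ _, mem_ite_antidiagonal_tsub.2 ?_⟩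
    rw [← smul_add_ofResidues_add_iff]
    exact (congrArg (fun q ↦ q.1 + q.2) (decompose hp)).trans
      (HasAntidiagonal.mem_antidiagonal.1 hp)
  · rw [HasAntidiagonal.mem_antidiagonal, smul_add_ofResidues_add_iff]
    exact mem_ite_antidiagonal_tsub.1 (mem_sigma.1 hx).2
  · rw [residues_smul_add_ofResidues, smul_add_ofResidues_floorDiv, smul_add_ofResidues_floorDiv]
  · conv_lhs => rw [← decompose hp]

theorem multisection_eq_add_sum_of_eq_one_add_mul [DecidableEq σ] {F G : MvPowerSeries σ R}
    (hG : G = 1 + F * G) (ρ : σ → Fin c) :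
    multisection c ρ G = multisection c ρ 1 + ∑ t : σ → Fin c,
      monomial (carry ρ (ρ - t)) 1 * multisection c (ρ - t) F * multisection c t G := by
  conv_lhs => rw [hG, map_add, multisection_mul]
  congr 1
  refine Fintype.sum_equiv (Equiv.subLeft ρ) _ _ fun s ↦ ?_
  rw [Equiv.subLeft_apply, sub_sub_cancel, mul_assoc]

theorem sum_val_sub_lt {ρ s : σ → Fin c} (hcarry : carry ρ s = 0) (hs : s ≠ 0) :
    ∑ i, ((ρ - s) i : ℕ) < ∑ i, (ρ i : ℕ) := by
  have hle (i : σ) : s i ≤ ρ i :=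
    not_lt.1 fun h ↦ by simpa [h] using DFunLike.congr_fun hcarry i
  obtain ⟨i, hi⟩ := Function.ne_iff.1 hs
  refine sum_lt_sum (fun j _ ↦ ?_) ⟨i, mem_univ i, ?_⟩ <;>
    rw [Pi.sub_apply, Fin.coe_sub_iff_le.2 (hle _)]
  · exact Nat.sub_le _ _
  · exact Nat.sub_lt_self (Nat.pos_of_ne_zero (Fin.val_ne_iff.2 hi)) (hle i)

theorem sum_val_lt_of_constantCoeff_ne_zero {F : MvPowerSeries σ R} (hF : constantCoeff F = 0)
    {ρ t : σ → Fin c}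
    (h : constantCoeff (monomial (carry ρ (ρ - t)) 1 * multisection c (ρ - t) F) ≠ 0) :
    ∑ i, (t i : ℕ) < ∑ i, (ρ i : ℕ) := by
  rw [← coeff_zero_eq_constantCoeff_apply, coeff_monomial_mul] at h
  split_ifs at h with hcarry
  · have hs : ρ - t ≠ 0 := fun hs ↦ h <| by
      rw [one_mul, zero_tsub, coeff_multisection, hs, ofResidues_zero, smul_zero, zero_add,
        coeff_zero_eq_constantCoeff_apply, hF]
    simpa only [sub_sub_cancel] using sum_val_sub_lt (nonpos_iff_eq_zero.1 hcarry) hs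
  · exact absurd rfl h

end Multisection

end MvPowerSeries

namespace NRational

open MvPowerSeries

variable {k : ℕ}

theorem one : NRational k 1 :=
  geom zero (map_zero _) (by rw [zero_mul, add_zero])

theorem sum {ι : Type*} (s : Finset ι) {F : ι → MvPowerSeries (Fin k) ℕ}
    (hF : ∀ i ∈ s, NRational k (F i)) : NRational k (∑ i ∈ s, F i) := by
  classical
  induction s using Finset.induction_on with
  | empty => simpa using zero
  | insert i s hi ih =>
    rw [sum_insert hi]
    exact add (hF i (mem_insert_self i s)) (ih fun j hj ↦ hF j (mem_insert_of_mem hj))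

theorem pow {F : MvPowerSeries (Fin k) ℕ} (hF : NRational k F) (n : ℕ) :
    NRational k (F ^ n) := by
  induction n with
  | zero => simpa using one
  | succ n ih => simpa only [pow_succ] using mul ih hF

theorem monomial_one (e : Fin k →₀ ℕ) : NRational k (monomial e 1) := by
  induction e using Finsupp.induction with
  | zero => simpa using one
  | single_add i n e _ _ ih =>
    rw [← mul_one (1 : ℕ), ← monomial_mul_monomial, ← X_pow_eq]
    exact mul (pow (X i) n) ih

theorem exists_eq_mul_of_eq_add_mul {A B X : MvPowerSeries (Fin k) ℕ} (hA : NRational k A)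
    (h0 : constantCoeff A = 0) (hX : X = B + A * X) : ∃ Q, NRational k Q ∧ X = Q * B := by
  obtain ⟨Q, hQ⟩ := exists_eq_one_add_mul h0
  exact ⟨Q, geom hA h0 hQ, eq_mul_of_eq_add_mul h0 hQ hX⟩

theorem of_eq_add_sum_mul {ι : Type*} [DecidableEq ι] (rank : ι → ℕ) (S : Finset ι)
    {A : ι → ι → MvPowerSeries (Fin k) ℕ} {P V : ι → MvPowerSeries (Fin k) ℕ}
    (hA : ∀ i ∈ S, ∀ j ∈ S, NRational k (A i j)) (hP : ∀ i ∈ S, NRational k (P i))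
    (hrank : ∀ i ∈ S, ∀ j ∈ S, constantCoeff (A i j) ≠ 0 → rank j < rank i)
    (hV : ∀ i ∈ S, V i = P i + ∑ j ∈ S, A i j * V j) : ∀ i ∈ S, NRational k (V i) := by
  induction S using Finset.induction_on generalizing A P with
  | empty => simp
  | insert a T ha ih =>
    have mem_a := mem_insert_self a T
    have mem_T : ∀ {i}, i ∈ T → i ∈ insert a T := mem_insert_of_mem
    have hAaa : constantCoeff (A a a) = 0 := by
      by_contra h
      exact lt_irrefl _ (hrank a mem_a a mem_a h)
    have hVa_eq : V a = (P a + ∑ j ∈ T, A a j * V j) + A a a * V a := by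
      conv_lhs => rw [hV a mem_a, sum_insert ha]
      ring
    obtain ⟨Q, hQ, hVa⟩ := exists_eq_mul_of_eq_add_mul (hA a mem_a a mem_a) hAaa hVa_eq
    have hVT : ∀ i ∈ T, NRational k (V i) := by
      refine ih (A := fun i j ↦ A i j + A i a * Q * A a j) (P := fun i ↦ P i + A i a * Q * P a)
        (fun i hi j hj ↦ add (hA i (mem_T hi) j (mem_T hj))
          (mul (mul (hA i (mem_T hi) a mem_a) hQ) (hA a mem_a j (mem_T hj))))
        (fun i hi ↦ add (hP i (mem_T hi)) (mul (mul (hA i (mem_T hi) a mem_a) hQ) (hP a mem_a)))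
        (fun i hi j hj h ↦ ?_) (fun i hi ↦ ?_)
      · simp only [map_add, map_mul] at h
        by_cases hij : constantCoeff (A i j) = 0
        · rw [hij, zero_add] at h
          exact (hrank a mem_a j (mem_T hj) (right_ne_zero_of_mul h)).trans
            (hrank i (mem_T hi) a mem_a (left_ne_zero_of_mul (left_ne_zero_of_mul h)))
        · exact hrank i (mem_T hi) j (mem_T hj) hij
      · rw [hV i (mem_T hi), sum_insert ha, hVa]
        simp only [add_mul, sum_add_distrib, mul_add, mul_sum, mul_assoc]
        ring
    intro i hi
    rcases mem_insert.1 hi with rfl | hi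
    · rw [hVa]
      exact mul hQ (add (hP i mem_a) (sum T fun j hj ↦ mul (hA i mem_a j (mem_T hj)) (hVT j hj)))
    · exact hVT i hi

theorem multisection_monomial_one {c : ℕ} [NeZero c] (ρ : Fin k → Fin c)
    (n : Fin k →₀ ℕ) :
    NRational k (multisection c ρ (monomial n 1)) := by
  rw [multisection_monomial]
  split_ifs
  exacts [monomial_one _, zero]

theorem multisection {c : ℕ} [NeZero c] {F : MvPowerSeries (Fin k) ℕ} (hF : NRational k F)
    (ρ : Fin k → Fin c) : NRational k (multisection c ρ F) := by
  induction hF generalizing ρ with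
  | zero => simpa only [map_zero] using zero
  | X i => simpa only [X_def] using multisection_monomial_one ρ _
  | add _ _ ihF ihG => simpa only [map_add] using add (ihF ρ) (ihG ρ)
  | mul _ _ ihF ihG =>
    rw [multisection_mul]
    exact sum _ fun s _ ↦ mul (monomial_one _) (mul (ihF s) (ihG _))
  | geom _ hF0 hG ih =>
    refine of_eq_add_sum_mul (fun ρ ↦ ∑ i, (ρ i : ℕ)) univ
      (fun _ _ _ _ ↦ mul (monomial_one _) (ih _))
      (fun ρ _ ↦ by simpa only [monomial_zero_one] using multisection_monomial_one ρ 0)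
      (fun _ _ _ _ h ↦ sum_val_lt_of_constantCoeff_ne_zero hF0 h)
      (fun ρ _ ↦ multisection_eq_add_sum_of_eq_one_add_mul hG ρ) ρ (mem_univ ρ)

end NRational

/-- Every quasi-diagonal `n ↦ [x₁^{cn} ⋯ x_k^{cn}] F` of an ℕ-rational generating
function is a diagonal of an ℕ-rational generating function. -/
theorem quasiDiagonal_isDiagonal (c k : ℕ) (hc : 1 ≤ c) (hk : 1 ≤ k)
    (F : MvPowerSeries (Fin k) ℕ) (hF : NRational k F) (f : ℕ → ℕ)
    (hf : ∀ n : ℕ,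
      f n = MvPowerSeries.coeff (Finsupp.equivFunOnFinite.symm fun _ => c * n) F) :
    ∃ (l : ℕ) (G : MvPowerSeries (Fin l) ℕ), 1 ≤ l ∧ NRational l G ∧
      ∀ n : ℕ,
        f n = MvPowerSeries.coeff (Finsupp.equivFunOnFinite.symm fun _ => n) G := by
  have : NeZero c := ⟨by omega⟩
  refine ⟨k, MvPowerSeries.multisection c 0 F, hk, hF.multisection 0, fun n ↦ ?_⟩
  rw [hf n, MvPowerSeries.coeff_multisection]
  congr
  ext
  simp
end

section
/- Let α₁,…,α_r : ℝ^d → ℝ be affine functions with integer coefficients, and let P = {x ∈ ℝ^d : α_i(x) ≥ 0 for all i = 1,…,r} be the associated (possibly unbounded) polyhedron. If P contains at least one and only finitely many points of the integer lattice ℤ^d, then P is bounded. -/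
/-!
If `P = {x | 0 ≤ A x + b}` is unbounded, normalising a sequence of points of `P` escaping to
infinity gives, by compactness of the unit sphere, a direction `u ≠ 0` with `0 ≤ A u`.
Simultaneous Dirichlet approximation produces a large `t : ℕ` and an integer vector `w ≠ 0`
with `t • u - w` so small that `A (t • u - w)` has entries in `(-1, 1)`; since `A w` is an
integer vector and `0 ≤ t • A u`, this forces `0 ≤ A w`. Then `v + k • w`, `k : ℕ`, are
infinitely many lattice points of `P` for any lattice point `v ∈ P`.
-/

open Filter Topology Matrix

variable {ι n : Type*} [Fintype n]

lemma exists_ne_zero_mulVec_nonneg_of_not_isBounded (M : Matrix ι n ℝ) (c : ι → ℝ)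
    (h : ¬ Bornology.IsBounded {x | 0 ≤ M *ᵥ x + c}) : ∃ u ≠ 0, 0 ≤ M *ᵥ u := by
  rw [isBounded_iff_forall_norm_le] at h
  push Not at h
  choose x hxs hx using fun k : ℕ => h k
  have hnorm : Tendsto (‖x ·‖) atTop atTop :=
    tendsto_atTop_mono (fun k => (hx k).le) tendsto_natCast_atTop_atTop
  have hsphere (k : ℕ) : ‖x k‖⁻¹ • x k ∈ Metric.sphere (0 : n → ℝ) 1 := by
    have : x k ≠ 0 := norm_pos_iff.1 ((Nat.cast_nonneg k).trans_lt (hx k))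
    simp [norm_smul, this]
  obtain ⟨u, hu, φ, hφ, hconv⟩ := (isCompact_sphere (0 : n → ℝ) 1).tendsto_subseq hsphere
  refine ⟨u, ne_zero_of_mem_unit_sphere ⟨u, hu⟩, ?_⟩
  have hlim : Tendsto (fun k => M *ᵥ (‖x (φ k)‖⁻¹ • x (φ k))) atTop (𝓝 (M *ᵥ u)) :=
    ((continuous_const.matrix_mulVec continuous_id).tendsto u).comp hconv
  have hlow : Tendsto (fun k => -(‖x (φ k)‖⁻¹ • c)) atTop (𝓝 0) := by
    simpa using ((hnorm.comp hφ.tendsto_atTop).inv_tendsto_atTop.smul_const c).neg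
  refine le_of_tendsto_of_tendsto hlow hlim (Eventually.of_forall fun k => ?_)
  dsimp only
  rw [mulVec_smul, neg_le_iff_add_nonneg, ← smul_add]
  exact smul_nonneg (inv_nonneg.2 (norm_nonneg _)) (hxs (φ k))

/-- Simultaneous Dirichlet approximation: the fractional parts of `k • u` have a convergent
subsequence, and the difference of two of its far-apart terms is `t • u - w`. -/
lemma frequently_exists_int_dist_natCast_smul_lt (u : n → ℝ) {δ : ℝ} (hδ : 0 < δ) :
    ∃ᶠ t : ℕ in atTop, ∃ w : n → ℤ, dist ((t : ℝ) • u) (fun j => (w j : ℝ)) < δ := by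
  rw [frequently_atTop]
  intro N
  obtain ⟨_, -, φ, hφ, hconv⟩ := (isCompact_univ_pi fun _ => isCompact_Icc).tendsto_subseq
    (x := fun (k : ℕ) (j : n) => Int.fract (k * u j))
    fun k j _ => ⟨Int.fract_nonneg (k * u j), (Int.fract_lt_one (k * u j)).le⟩
  obtain ⟨K, hK⟩ := Metric.cauchySeq_iff'.1 hconv.cauchySeq δ hδ
  have hgap := hφ.add_le_nat N K
  refine ⟨φ (N + K) - φ K, by omega, fun j => ⌊φ (N + K) * u j⌋ - ⌊φ K * u j⌋, ?_⟩
  convert hK (N + K) (by omega) using 1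
  rw [dist_eq_norm, dist_eq_norm]
  congr 1
  ext j
  simp only [Pi.sub_apply, Pi.smul_apply, Function.comp_apply, smul_eq_mul, Int.fract,
    Int.cast_sub, Nat.cast_sub (hφ.monotone (by omega : K ≤ N + K))]
  ring

lemma intCast_mulVec_apply {R : Type*} [Ring R] (A : Matrix ι n ℤ) (v : n → ℤ) (i : ι) :
    ((A *ᵥ v) i : R) = (A.map (↑) *ᵥ fun j => (v j : R)) i := by
  simpa [Function.comp_def] using RingHom.map_mulVec (Int.castRingHom R) A v i

lemma exists_ne_zero_int_mulVec_nonneg [Fintype ι] (A : Matrix ι n ℤ) {u : n → ℝ} (hu : u ≠ 0)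
    (hAu : 0 ≤ A.map (↑) *ᵥ u) : ∃ w : n → ℤ, w ≠ 0 ∧ 0 ≤ A *ᵥ w := by
  set A' : Matrix ι n ℝ := A.map (↑)
  have hcont : Continuous (A' *ᵥ · : (n → ℝ) → ι → ℝ) :=
    continuous_const.matrix_mulVec continuous_id
  obtain ⟨δ, hδ, hsmall⟩ : ∃ δ > 0, ∀ e : n → ℝ, ‖e‖ < δ → ‖A' *ᵥ e‖ < 1 := by
    simpa using Metric.continuous_iff.1 hcont 0 1 one_pos
  have hlarge : ∀ᶠ t : ℕ in atTop, δ < t * ‖u‖ :=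
    (tendsto_natCast_atTop_atTop.atTop_mul_const (norm_pos_iff.2 hu)).eventually_gt_atTop δ
  obtain ⟨t, ⟨w, hw⟩, ht⟩ :=
    ((frequently_exists_int_dist_natCast_smul_lt u hδ).and_eventually hlarge).exists
  refine ⟨w, ?_, fun i => ?_⟩
  · rintro rfl
    simp only [Pi.zero_apply, Int.cast_zero, ← Pi.zero_def, dist_eq_norm, sub_zero, norm_smul,
      RCLike.norm_natCast] at hw
    linarith
  · set e : n → ℝ := (t : ℝ) • u - fun j => (w j : ℝ)
    have he : |(A' *ᵥ e) i| < 1 :=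
      (norm_le_pi_norm _ i).trans_lt (hsmall e (by rwa [← dist_eq_norm]))
    have hAw : ((A *ᵥ w) i : ℝ) = t * (A' *ᵥ u) i - (A' *ᵥ e) i := by
      simp [intCast_mulVec_apply, e, mulVec_sub, mulVec_smul, A']
    have : (-1 : ℝ) < (A *ᵥ w) i := by
      rw [hAw]
      linarith [(abs_lt.1 he).2, mul_nonneg t.cast_nonneg (hAu i)]
    have : (-1 : ℤ) < (A *ᵥ w) i := by exact_mod_cast this
    exact Int.lt_iff_add_one_le.1 this

lemma setOf_mulVec_add_nonneg_infinite {R : Type*} [CommRing R] [LinearOrder R]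
    [IsStrictOrderedRing R] (A : Matrix ι n R) (b : ι → R) {v w : n → R}
    (hv : 0 ≤ A *ᵥ v + b) (hw : w ≠ 0) (hAw : 0 ≤ A *ᵥ w) :
    {x | 0 ≤ A *ᵥ x + b}.Infinite := by
  refine Set.infinite_of_injective_forall_mem (f := fun k : ℕ => v + (k : R) • w)
    ((add_right_injective v).comp ((smul_left_injective R hw).comp Nat.cast_injective))
    fun k => ?_
  simp only [Set.mem_ofPred_eq, mulVec_add, mulVec_smul, add_right_comm]
  exact add_nonneg hv (smul_nonneg k.cast_nonneg hAw)

lemma intCast_mulVec_add_nonneg_iff {R : Type*} [CommRing R] [LinearOrder R]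
    [IsStrictOrderedRing R] (A : Matrix ι n ℤ) (b : ι → ℤ) (v : n → ℤ) :
    0 ≤ A.map (↑) *ᵥ (fun j => (v j : R)) + (fun i => (b i : R)) ↔ 0 ≤ A *ᵥ v + b := by
  simp only [Pi.le_def, Pi.add_apply, Pi.zero_apply, ← intCast_mulVec_apply, ← Int.cast_add,
    Int.cast_nonneg_iff]

/-- **Geometric lemma**: a polyhedron `P ⊆ ℝ^d` cut out by finitely many
integer-coefficient affine inequalities that contains at least one and only finitely
many integer lattice points is bounded. -/
theorem polyhedron_finite_lattice_points_bounded (r d : ℕ)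
    (A : Fin r → Fin d → ℤ) (b : Fin r → ℤ) (P : Set (Fin d → ℝ))
    (hP : P = {x : Fin d → ℝ | ∀ i : Fin r, 0 ≤ (∑ j, (A i j : ℝ) * x j) + (b i : ℝ)})
    (hne : ∃ v : Fin d → ℤ, (fun j => (v j : ℝ)) ∈ P)
    (hfin : {v : Fin d → ℤ | (fun j => (v j : ℝ)) ∈ P}.Finite) :
    Bornology.IsBounded P := by
  have hP' : P = {x | 0 ≤ (Matrix.of A).map (↑) *ᵥ x + fun i => (b i : ℝ)} := by
    rw [hP]; rfl
  by_contra hunb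
  obtain ⟨u, hu, hAu⟩ := exists_ne_zero_mulVec_nonneg_of_not_isBounded _ _ (hP' ▸ hunb)
  obtain ⟨w, hw, hAw⟩ := exists_ne_zero_int_mulVec_nonneg (.of A) hu hAu
  obtain ⟨v, hv⟩ := hne
  simp only [hP', Set.mem_ofPred_eq, intCast_mulVec_add_nonneg_iff] at hv hfin
  exact setOf_mulVec_add_nonneg_infinite (.of A) b hv hw hAw hfin
end
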